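/- arXiv:2506.21242 — 3 statements merged into one kernel-verified Lean document; each statement's English description precedes it below -/
import Mathlib

section
/- Under the standing Runge–Kutta assumptions and the sectorial kernel assumption, there exists a constant C > 0, depending only on the Runge–Kutta data and α but not on the mesh or the data, such that for every time mesh on [0,T], every continuous f : [0,T] → X and every 1 ≤ n ≤ N, the gCQ approximation satisfies ‖u_n‖_Y ≤ C·M·Σ_{j=1}^n τ_j·(t_n − t_{j−1})^{α−1}·sup_{t∈[t_{j−1},t_j]} ‖f(t)‖_X. -/
open MeasureTheory Matrix

noncomputable section

/-- Weighted combination of an `X`-valued stage vector. -/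
def vdot {s : ℕ} {X : Type*} [AddCommMonoid X] [Module ℝ X]
    (b : Fin s → ℝ) (v : Fin s → X) : X :=
  ∑ i, b i • v i

/-- A real `s × s` matrix acting componentwise on an `X`-valued stage vector. -/
def matVec {s : ℕ} {X : Type*} [AddCommMonoid X] [Module ℝ X]
    (M : Matrix (Fin s) (Fin s) ℝ) (v : Fin s → X) : Fin s → X :=
  fun i => ∑ j, M i j • v j

/-- The Runge–Kutta stability function `R(r) = 1 + r·bᵀ(I − rA)⁻¹𝟙` at a real argument. -/
def stabR {s : ℕ} (A : Matrix (Fin s) (Fin s) ℝ) (b : Fin s → ℝ) (r : ℝ) : ℝ :=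
  1 + r * (b ⬝ᵥ (((1 : Matrix (Fin s) (Fin s) ℝ) - r • A)⁻¹ *ᵥ (fun _ => (1 : ℝ))))

/-- The Runge–Kutta stability function at a complex argument. -/
def stabC {s : ℕ} (A : Matrix (Fin s) (Fin s) ℝ) (b : Fin s → ℝ) (z : ℂ) : ℂ :=
  1 + z * ((fun i => (b i : ℂ)) ⬝ᵥ
    (((1 : Matrix (Fin s) (Fin s) ℂ) - z • A.map ((↑) : ℝ → ℂ))⁻¹ *ᵥ (fun _ => (1 : ℂ))))

/-- The standing Runge–Kutta assumptions: an A-stable, stiffly accurate method whose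
coefficient matrix is invertible and diagonalizable over `ℂ` with eigenvalues of positive
real part, of classical order `p ≥ 1` and stage order `q ≤ p`, with nodes
`0 ≤ c₁ ≤ ⋯ ≤ c_s = 1`. -/
structure RKData (s : ℕ) (A : Matrix (Fin s) (Fin s) ℝ) (b c : Fin s → ℝ)
    (p q : ℕ) : Prop where
  hs : 0 < s
  hp : 1 ≤ p
  hqp : q ≤ p
  hc_nonneg : ∀ i, 0 ≤ c i
  hc_mono : Monotone c
  hc_last : c ⟨s - 1, Nat.sub_lt hs Nat.one_pos⟩ = 1
  hA_inv : IsUnit A.det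
  hA_diag : ∃ P D : Matrix (Fin s) (Fin s) ℂ, IsUnit P.det ∧ D.IsDiag ∧
    A.map ((↑) : ℝ → ℂ) = P * D * P⁻¹
  hA_eig : ∀ z : ℂ, (A.map ((↑) : ℝ → ℂ)).charpoly.IsRoot z → 0 < z.re
  hAstab : ∀ z : ℂ, z.re ≤ 0 → ‖stabC A b z‖ ≤ 1
  hstiff : ∀ i, b i = A ⟨s - 1, Nat.sub_lt hs Nat.one_pos⟩ i
  horder : ∀ ℓ : ℕ, 1 ≤ ℓ → ℓ ≤ p → ∑ i, b i * c i ^ (ℓ - 1) = 1 / (ℓ : ℝ)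
  hstage : ∀ ℓ : ℕ, 1 ≤ ℓ → ℓ ≤ q → ∀ i,
    ∑ j, A i j * c j ^ (ℓ - 1) = c i ^ ℓ / (ℓ : ℝ)
  hbpow : ∀ m ℓ : ℕ, 1 ≤ ℓ → m + 1 + ℓ ≤ p →
    b ⬝ᵥ ((A ^ (m + 1)) *ᵥ (fun i => c i ^ (ℓ - 1))) =
      (1 / (ℓ : ℝ)) * (b ⬝ᵥ ((A ^ m) *ᵥ (fun i => c i ^ ℓ)))

/-- A time mesh `0 = t₀ < t₁ < ⋯ < t_N = T` on `[0, T]`. -/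
structure TimeMesh (T : ℝ) (N : ℕ) (t : ℕ → ℝ) : Prop where
  hN : 0 < N
  h0 : t 0 = 0
  hT : t N = T
  hinc : ∀ j, j < N → t j < t (j + 1)

/-- Maximal step size `τ_max` of the mesh. -/
def tauMax (t : ℕ → ℝ) (N : ℕ) : ℝ :=
  if h : 1 ≤ N then
    (Finset.Icc 1 N).sup' (Finset.nonempty_Icc.mpr h) (fun j => t j - t (j - 1))
  else 0

/-- Minimal step size `τ_min` of the mesh. -/
def tauMin (t : ℕ → ℝ) (N : ℕ) : ℝ :=
  if h : 1 ≤ N then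
    (Finset.Icc 1 N).inf' (Finset.nonempty_Icc.mpr h) (fun j => t j - t (j - 1))
  else 0

/-- The quasi-uniformity constant `c_Δ` of the mesh. -/
def quasiConst (t : ℕ → ℝ) (N : ℕ) : ℝ :=
  if h : 2 ≤ N then
    (1 / 2) * (Finset.Icc 2 N).sup' (Finset.nonempty_Icc.mpr h)
      (fun i => (t i - t (i - 1)) / (t (i - 1) - t (i - 2)) +
        (t (i - 1) - t (i - 2)) / (t i - t (i - 1)))
  else 1

/-- The graded mesh `t_n = (n τ)^γ`, `τ = T^{1/γ}/N`. -/
def gradedMesh (T γ : ℝ) (N n : ℕ) : ℝ :=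
  ((n : ℝ) * (T ^ (1 / γ) / (N : ℝ))) ^ γ

/-- The Runge–Kutta gCQ value `y_n(x)`. -/
def gcqY {X : Type*} [AddCommGroup X] [Module ℝ X] {s : ℕ}
    (A : Matrix (Fin s) (Fin s) ℝ) (b c : Fin s → ℝ)
    (t : ℕ → ℝ) (f : ℝ → X) (n : ℕ) (x : ℝ) : X :=
  ∑ j ∈ Finset.Icc 1 n,
    (∏ l ∈ Finset.Icc (j + 1) n, stabR A b (-((t l - t (l - 1)) * x))) •
      ((t j - t (j - 1)) •
        vdot b (matVec (((1 : Matrix (Fin s) (Fin s) ℝ) + ((t j - t (j - 1)) * x) • A)⁻¹)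
          (fun i => f (t (j - 1) + c i * (t j - t (j - 1))))))

/-- The Runge–Kutta gCQ approximation `u_n = ∫_0^∞ G(x)(y_n(x)) dx`. -/
def gcqU {X Y : Type*} [NormedAddCommGroup X] [NormedSpace ℂ X]
    [NormedAddCommGroup Y] [NormedSpace ℂ Y] [CompleteSpace Y] {s : ℕ}
    (G : ℝ → X →L[ℂ] Y) (A : Matrix (Fin s) (Fin s) ℝ) (b c : Fin s → ℝ)
    (t : ℕ → ℝ) (f : ℝ → X) (n : ℕ) : Y :=
  ∫ x in Set.Ioi (0 : ℝ), (G x) (gcqY A b c t f n x)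

/-- The convolution kernel `k(r) = ∫_0^∞ e^{-x r} G(x) dx`. -/
def convKernel {X Y : Type*} [NormedAddCommGroup X] [NormedSpace ℂ X]
    [NormedAddCommGroup Y] [NormedSpace ℂ Y] [CompleteSpace Y]
    (G : ℝ → X →L[ℂ] Y) (r : ℝ) : X →L[ℂ] Y :=
  ∫ x in Set.Ioi (0 : ℝ), Real.exp (-(x * r)) • G x

/-- The exact convolution `u(r) = ∫_0^r k(r - σ)(f(σ)) dσ`. -/
def exactU {X Y : Type*} [NormedAddCommGroup X] [NormedSpace ℂ X]
    [NormedAddCommGroup Y] [NormedSpace ℂ Y] [CompleteSpace Y]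
    (G : ℝ → X →L[ℂ] Y) (f : ℝ → X) (r : ℝ) : Y :=
  ∫ σ in (0 : ℝ)..r, (convKernel G (r - σ)) (f σ)

/-- The solution `y(x, t)` of `∂_t y = -x·y + t^β`, `y(x, 0) = 0`. -/
def ySol (β x t : ℝ) : ℝ :=
  Real.Gamma (β + 1) *
    ∑' k : ℕ, (-x) ^ k * t ^ ((k : ℝ) + β + 1) / Real.Gamma ((k : ℝ) + β + 2)

/-- The `ℓ`-th time derivative of `y(x, ·)`. -/
def yDeriv (β : ℝ) (ℓ : ℕ) (x t : ℝ) : ℝ :=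
  Real.Gamma (β + 1) * t ^ (β - ℓ + 1) *
    ∑' k : ℕ, (-(x * t)) ^ k / Real.Gamma ((k : ℝ) + β - ℓ + 2)

/-- The Runge–Kutta Peano vector `δ^{(ℓ)}`. -/
def deltaVec {s : ℕ} (A : Matrix (Fin s) (Fin s) ℝ) (c : Fin s → ℝ) (ℓ : ℕ) :
    Fin s → ℝ :=
  fun i => (c i ^ ℓ / (ℓ : ℝ) - ∑ j, A i j * c j ^ (ℓ - 1)) / ((ℓ - 1).factorial : ℝ)

/-- The last standard basis vector `e_s` of `ℝ^s`. -/
def esVec (s : ℕ) : Fin s → ℝ := fun i => if (i : ℕ) = s - 1 then 1 else 0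

/-- Descending matrix product `F n * F (n-1) * ⋯ * F (j+1)` (empty product = 1). -/
def prodDesc {s : ℕ} (F : ℕ → Matrix (Fin s) (Fin s) ℝ) (j n : ℕ) :
    Matrix (Fin s) (Fin s) ℝ :=
  (((List.range' (j + 1) (n - j)).reverse).map F).prod

/-- The induced operator norm of a real matrix. -/
def matOpNorm {s : ℕ} (A : Matrix (Fin s) (Fin s) ℝ) : ℝ :=
  ‖LinearMap.toContinuousLinearMap (Matrix.toLin' A)‖

/-- First-step stage defects for data `t^β`. -/
def d1Stage {s : ℕ} (A : Matrix (Fin s) (Fin s) ℝ) (c : Fin s → ℝ)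
    (β τ₁ x : ℝ) : Fin s → ℝ :=
  fun i => ySol β x (c i * τ₁) -
    τ₁ * ∑ j, A i j * (-x * ySol β x (c j * τ₁) + (c j * τ₁) ^ β)

/-- First-step defect for data `t^β`. -/
def d1Step {s : ℕ} (b c : Fin s → ℝ) (β τ₁ x : ℝ) : ℝ :=
  ySol β x τ₁ - τ₁ * ∑ j, b j * (-x * ySol β x (c j * τ₁) + (c j * τ₁) ^ β)

/-- Step defect `d_j(x)` for data `t^β` on a mesh `t`. -/
def djStep {s : ℕ} (b c : Fin s → ℝ) (β : ℝ) (t : ℕ → ℝ) (j : ℕ) (x : ℝ) : ℝ :=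
  ySol β x (t j) - ySol β x (t (j - 1)) - (t j - t (j - 1)) *
    ∑ k, b k * (-x * ySol β x (t (j - 1) + c k * (t j - t (j - 1))) +
      (t (j - 1) + c k * (t j - t (j - 1))) ^ β)

/-- Stage defects `d_{ji}(x)` for data `t^β` on a mesh `t`. -/
def djStage {s : ℕ} (A : Matrix (Fin s) (Fin s) ℝ) (c : Fin s → ℝ)
    (β : ℝ) (t : ℕ → ℝ) (j : ℕ) (x : ℝ) : Fin s → ℝ :=
  fun i => ySol β x (t (j - 1) + c i * (t j - t (j - 1))) - ySol β x (t (j - 1)) -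
    (t j - t (j - 1)) * ∑ k, A i k * (-x * ySol β x (t (j - 1) + c k * (t j - t (j - 1))) +
      (t (j - 1) + c k * (t j - t (j - 1))) ^ β)

/-- The first-interval error component `E_n^1` for data `t^β · v`. -/
def firstIntervalError {X Y : Type*} [NormedAddCommGroup X] [NormedSpace ℂ X]
    [NormedAddCommGroup Y] [NormedSpace ℂ Y] [CompleteSpace Y] {s : ℕ}
    (G : ℝ → X →L[ℂ] Y) (A : Matrix (Fin s) (Fin s) ℝ) (b c : Fin s → ℝ)
    (β : ℝ) (t : ℕ → ℝ) (v : X) (n : ℕ) : Y :=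
  ∫ x in Set.Ioi (0 : ℝ),
    (∏ j ∈ Finset.Icc 2 n, stabR A b (-((t j - t (j - 1)) * x))) •
      (G x) ((d1Step b c β (t 1 - t 0) x -
        (t 1 - t 0) * x * (b ⬝ᵥ (((1 : Matrix (Fin s) (Fin s) ℝ) +
          ((t 1 - t 0) * x) • A)⁻¹ *ᵥ d1Stage A c β (t 1 - t 0) x))) • v)

/-- The accumulated error component `E_n^2` for data `t^β · v`. -/
def accumError {X Y : Type*} [NormedAddCommGroup X] [NormedSpace ℂ X]
    [NormedAddCommGroup Y] [NormedSpace ℂ Y] [CompleteSpace Y] {s : ℕ}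
    (G : ℝ → X →L[ℂ] Y) (A : Matrix (Fin s) (Fin s) ℝ) (b c : Fin s → ℝ)
    (β : ℝ) (t : ℕ → ℝ) (v : X) (n : ℕ) : Y :=
  ∑ j ∈ Finset.Icc 2 n, ∫ x in Set.Ioi (0 : ℝ),
    (∏ l ∈ Finset.Icc (j + 1) n, stabR A b (-((t l - t (l - 1)) * x))) •
      (G x) ((djStep b c β t j x - (t j - t (j - 1)) * x *
        (b ⬝ᵥ (((1 : Matrix (Fin s) (Fin s) ℝ) + ((t j - t (j - 1)) * x) • A)⁻¹ *ᵥ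
          djStage A c β t j x))) • v)

/-- The matrix `m^{(n,j)}(x)` inside the gCQ weights. -/
def wMat {s : ℕ} (A : Matrix (Fin s) (Fin s) ℝ) (t : ℕ → ℝ) (n j : ℕ) (x : ℝ) :
    Matrix (Fin s) (Fin s) ℝ :=
  prodDesc (fun l => vecMulVec
      ((((1 : Matrix (Fin s) (Fin s) ℝ) + ((t l - t (l - 1)) * x) • A)⁻¹) *ᵥ
        (fun _ => (1 : ℝ)))
      (esVec s)) j n *
    A * (((1 : Matrix (Fin s) (Fin s) ℝ) + ((t j - t (j - 1)) * x) • A)⁻¹)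

/-- The `(i,k)` entry of the gCQ weight operator `W_{n,j}`. -/
def gcqWeightEntry {X Y : Type*} [NormedAddCommGroup X] [NormedSpace ℂ X]
    [NormedAddCommGroup Y] [NormedSpace ℂ Y] [CompleteSpace Y] {s : ℕ}
    (G : ℝ → X →L[ℂ] Y) (A : Matrix (Fin s) (Fin s) ℝ)
    (t : ℕ → ℝ) (n j : ℕ) (i k : Fin s) : X →L[ℂ] Y :=
  (t j - t (j - 1)) • ∫ x in Set.Ioi (0 : ℝ), wMat A t n j x i k • G x

namespace GCQ
open Polynomial Set

variable {s : ℕ} (A : Matrix (Fin s) (Fin s) ℝ) (b : Fin s → ℝ)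

lemma eval_charpoly' {n : Type*} [Fintype n] [DecidableEq n] (M : Matrix n n ℂ) (w : ℂ) :
    (Matrix.charpoly M).eval w = (w • (1 : Matrix n n ℂ) - M).det := by
  rw [Matrix.charpoly, ← coe_evalRingHom, RingHom.map_det]
  congr 1
  ext i j
  by_cases h : i = j <;>
    simp [h, Matrix.charmatrix_apply, Matrix.diagonal_apply, Matrix.one_apply, Matrix.smul_apply]

def AC : Matrix (Fin s) (Fin s) ℂ := A.map ((↑) : ℝ → ℂ)

lemma det_pos_re (heig : ∀ z : ℂ, ((AC A).charpoly).IsRoot z → 0 < z.re)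
    (w : ℂ) (hw : (w • (1 : Matrix (Fin s) (Fin s) ℂ) - AC A).det = 0) : 0 < w.re := by
  apply heig
  unfold Polynomial.IsRoot
  rw [eval_charpoly' (AC A) w, hw]

def Bu (u : ℝ) : Matrix (Fin s) (Fin s) ℝ := u • (1 : Matrix (Fin s) (Fin s) ℝ) + (1 - u) • A

lemma map_Bu (u : ℝ) : (Bu A u).map ((↑) : ℝ → ℂ) =
    (u : ℂ) • (1 : Matrix (Fin s) (Fin s) ℂ) + ((1 : ℂ) - u) • AC A := by
  ext i j
  by_cases h : i = j <;>
    simp [Bu, AC, Matrix.map_apply, Matrix.one_apply, h]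

lemma Bu_det_unit (heig : ∀ z : ℂ, ((AC A).charpoly).IsRoot z → 0 < z.re)
    {u : ℝ} (hu0 : 0 ≤ u) (hu1 : u ≤ 1) : IsUnit (Bu A u).det := by
  rw [isUnit_iff_ne_zero]
  intro h0
  have hC : ((u : ℂ) • (1 : Matrix (Fin s) (Fin s) ℂ) + ((1:ℂ) - u) • AC A).det = 0 := by
    rw [← map_Bu]
    have : (Bu A u).map ((↑) : ℝ → ℂ) = (Bu A u).map (algebraMap ℝ ℂ) := rfl
    rw [this, ← RingHom.mapMatrix_apply (algebraMap ℝ ℂ), ← RingHom.map_det]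
    simp [h0]
  rcases eq_or_lt_of_le hu1 with h1 | h1
  · subst h1
    simp at hC
  · -- u < 1
    set w : ℂ := ((-(u / (1 - u)) : ℝ) : ℂ)
    have h1u : (1 : ℝ) - u ≠ 0 := by linarith
    have hc : (1 : ℂ) - (u : ℂ) ≠ 0 := by
      intro h
      apply h1u
      have := congrArg Complex.re h
      simpa using this
    have hs1 : (((u : ℝ) - 1 : ℝ) : ℂ) * w = (u : ℂ) := by
      show (((u : ℝ) - 1 : ℝ) : ℂ) * ((-(u / (1 - u)) : ℝ) : ℂ) = (u : ℂ)
      push_cast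
      field_simp
      ring
    have key : (u : ℂ) • (1 : Matrix (Fin s) (Fin s) ℂ) + ((1:ℂ) - u) • AC A =
        (((u : ℝ) - 1 : ℝ) : ℂ) • (w • (1 : Matrix (Fin s) (Fin s) ℂ) - AC A) := by
      rw [smul_sub, smul_smul, hs1]
      have h2 : ((1:ℂ) - (u:ℂ)) = -((((u : ℝ) - 1 : ℝ)) : ℂ) := by push_cast; ring
      rw [h2, neg_smul, ← sub_eq_add_neg]
    rw [key, Matrix.det_smul] at hC
    have hne : ((((u : ℝ) - 1 : ℝ)) : ℂ) ^ Fintype.card (Fin s) ≠ 0 := by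
      apply pow_ne_zero
      simp only [ne_eq, Complex.ofReal_eq_zero]
      linarith
    have := det_pos_re A heig w (by
      rcases mul_eq_zero.1 hC with h | h
      · exact absurd h hne
      · exact h)
    rw [show w = ((-(u / (1 - u)) : ℝ) : ℂ) from rfl, Complex.ofReal_re] at this
    have : u / (1 - u) < 0 := by linarith
    have : 0 ≤ u / (1 - u) := div_nonneg hu0 (by linarith)
    linarith

lemma Mz_det_unit (heig : ∀ z : ℂ, ((AC A).charpoly).IsRoot z → 0 < z.re)
    {z : ℂ} (hz : z.re ≤ 0) : IsUnit ((1 : Matrix (Fin s) (Fin s) ℂ) - z • AC A).det := by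
  rw [isUnit_iff_ne_zero]
  intro h0
  by_cases hz0 : z = 0
  · simp [hz0] at h0
  · have key : (1 : Matrix (Fin s) (Fin s) ℂ) - z • AC A =
        z • (z⁻¹ • (1 : Matrix (Fin s) (Fin s) ℂ) - AC A) := by
      rw [smul_sub, smul_smul, mul_inv_cancel₀ hz0, one_smul]
    rw [key, Matrix.det_smul] at h0
    have hzs : z ^ Fintype.card (Fin s) ≠ 0 := pow_ne_zero _ hz0
    have hdet : (z⁻¹ • (1 : Matrix (Fin s) (Fin s) ℂ) - AC A).det = 0 := by
      rcases mul_eq_zero.1 h0 with h | h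
      · exact absurd h hzs
      · exact h
    have hre := det_pos_re A heig z⁻¹ hdet
    rw [Complex.inv_re] at hre
    have h2 : 0 < Complex.normSq z := Complex.normSq_pos.2 hz0
    nlinarith [div_nonpos_of_nonpos_of_nonneg hz (le_of_lt h2)]

lemma det_diff (N : ℂ → Matrix (Fin s) (Fin s) ℂ)
    (h : ∀ i j, Differentiable ℂ (fun z => N z i j)) :
    Differentiable ℂ (fun z => (N z).det) := by
  have : (fun z => (N z).det) =
      fun z => ∑ σ : Equiv.Perm (Fin s), (Equiv.Perm.sign σ : ℂ) * ∏ i, N z (σ i) i := by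
    funext z
    rw [Matrix.det_apply]
    congr 1
    funext σ
    rw [Units.smul_def, zsmul_eq_mul]
  rw [this]
  apply Differentiable.fun_sum
  intro σ _
  exact (Differentiable.fun_finsetProd (fun i _ => h (σ i) i)).const_mul _

lemma adj_entry_diff (N : ℂ → Matrix (Fin s) (Fin s) ℂ)
    (h : ∀ i j, Differentiable ℂ (fun z => N z i j)) (i k : Fin s) :
    Differentiable ℂ (fun z => (N z).adjugate i k) := by
  have : (fun z => (N z).adjugate i k) =
      fun z => ((N z).updateRow k (Pi.single i 1)).det := by
    funext z; rw [Matrix.adjugate_apply]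
  rw [this]
  apply det_diff
  intro a j
  by_cases ha : a = k
  · subst ha
    simp only [Matrix.updateRow_self]
    exact differentiable_const _
  · simp only [Matrix.updateRow_ne ha]
    exact h a j

lemma Mz_entry_diff (i j : Fin s) :
    Differentiable ℂ (fun z : ℂ => ((1 : Matrix (Fin s) (Fin s) ℂ) - z • AC A) i j) := by
  have : (fun z : ℂ => ((1 : Matrix (Fin s) (Fin s) ℂ) - z • AC A) i j) =
      fun z : ℂ => (1 : Matrix (Fin s) (Fin s) ℂ) i j - z * AC A i j := by
    funext z; simp [Matrix.sub_apply, Matrix.smul_apply, smul_eq_mul]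
  rw [this]
  exact (differentiable_const _).sub (differentiable_id.mul (differentiable_const _))

lemma stabC_formula (z : ℂ) :
    stabC A b z = 1 + z * ((((1 : Matrix (Fin s) (Fin s) ℂ) - z • AC A).det)⁻¹ *
      ((fun i => (b i : ℂ)) ⬝ᵥ (((1 : Matrix (Fin s) (Fin s) ℂ) - z • AC A).adjugate *ᵥ
        (fun _ => (1 : ℂ))))) := by
  unfold stabC
  rw [show A.map ((↑) : ℝ → ℂ) = AC A from rfl]
  rw [Matrix.inv_def, Ring.inverse_eq_inv', Matrix.smul_mulVec, dotProduct_smul,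
    smul_eq_mul]

lemma stabC_diffOn (heig : ∀ z : ℂ, ((AC A).charpoly).IsRoot z → 0 < z.re) :
    DifferentiableOn ℂ (stabC A b) {z : ℂ | z.re < 0} := by
  have hfun : stabC A b = fun z =>
      1 + z * ((((1 : Matrix (Fin s) (Fin s) ℂ) - z • AC A).det)⁻¹ *
      ((fun i => (b i : ℂ)) ⬝ᵥ (((1 : Matrix (Fin s) (Fin s) ℂ) - z • AC A).adjugate *ᵥ
        (fun _ => (1 : ℂ))))) := funext (stabC_formula A b)
  rw [hfun]
  have hdet := det_diff (fun z => (1 : Matrix (Fin s) (Fin s) ℂ) - z • AC A) (Mz_entry_diff A)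
  intro z hz
  apply DifferentiableWithinAt.const_add
  apply DifferentiableWithinAt.mul differentiableWithinAt_id
  apply DifferentiableWithinAt.mul
  · apply DifferentiableAt.differentiableWithinAt
    apply DifferentiableAt.inv (hdet z)
    exact isUnit_iff_ne_zero.1 (Mz_det_unit A heig (le_of_lt hz))
  · apply DifferentiableAt.differentiableWithinAt
    have : (fun z : ℂ => (fun i => (b i : ℂ)) ⬝ᵥ
        (((1 : Matrix (Fin s) (Fin s) ℂ) - z • AC A).adjugate *ᵥ (fun _ => (1 : ℂ)))) =
        fun z => ∑ i, (b i : ℂ) *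
          ∑ k, ((1 : Matrix (Fin s) (Fin s) ℂ) - z • AC A).adjugate i k * 1 := by
      funext z; simp [dotProduct, Matrix.mulVec]
    rw [this]
    apply Differentiable.differentiableAt
    apply Differentiable.fun_sum; intro i _
    apply Differentiable.const_mul
    apply Differentiable.fun_sum; intro k _
    exact (adj_entry_diff _ (Mz_entry_diff A) i k).mul_const _

def GF (u : ℝ) : ℝ := b ⬝ᵥ ((Bu A u)⁻¹ *ᵥ (fun _ => (1 : ℝ)))

def rhoF (u : ℝ) : ℝ := 1 - (1 - u) * GF A b u

lemma u_mem {y : ℝ} (hy : 0 ≤ y) : 0 < 1 / (1 + y) ∧ 1 / (1 + y) ≤ 1 := by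
  constructor
  · positivity
  · rw [div_le_one (by linarith)]; linarith

lemma one_add_eq {y : ℝ} (hy : 0 ≤ y) :
    (1 : Matrix (Fin s) (Fin s) ℝ) + y • A = (1 / (1 + y))⁻¹ • Bu A (1 / (1 + y)) := by
  have h1y : (1 : ℝ) + y ≠ 0 := by linarith
  unfold Bu
  rw [smul_add, smul_smul, smul_smul]
  congr 1
  · rw [inv_mul_cancel₀ (by positivity), one_smul]
  · congr 1
    field_simp
    ring

lemma one_add_det_unit (heig : ∀ z : ℂ, ((AC A).charpoly).IsRoot z → 0 < z.re)
    {y : ℝ} (hy : 0 ≤ y) : IsUnit ((1 : Matrix (Fin s) (Fin s) ℝ) + y • A).det := by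
  obtain ⟨hu0, hu1⟩ := u_mem hy
  rw [one_add_eq A hy, Matrix.det_smul, isUnit_iff_ne_zero]
  apply mul_ne_zero
  · exact pow_ne_zero _ (inv_ne_zero (ne_of_gt hu0))
  · exact (Bu_det_unit A heig (le_of_lt hu0) hu1).ne_zero

lemma inv_one_add (heig : ∀ z : ℂ, ((AC A).charpoly).IsRoot z → 0 < z.re)
    {y : ℝ} (hy : 0 ≤ y) :
    ((1 : Matrix (Fin s) (Fin s) ℝ) + y • A)⁻¹ =
      (1 / (1 + y)) • (Bu A (1 / (1 + y)))⁻¹ := by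
  obtain ⟨hu0, hu1⟩ := u_mem hy
  apply Matrix.inv_eq_right_inv
  rw [one_add_eq A hy, Matrix.smul_mul, Matrix.mul_smul, smul_smul,
    inv_mul_cancel₀ (ne_of_gt hu0), one_smul,
    Matrix.mul_nonsing_inv _ (Bu_det_unit A heig (le_of_lt hu0) hu1)]

lemma stabR_eq_rho (heig : ∀ z : ℂ, ((AC A).charpoly).IsRoot z → 0 < z.re)
    {y : ℝ} (hy : 0 ≤ y) : stabR A b (-y) = rhoF A b (1 / (1 + y)) := by
  have h1y : (1 : ℝ) + y ≠ 0 := by linarith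
  unfold stabR rhoF GF
  rw [neg_smul, sub_neg_eq_add, inv_one_add A heig hy, Matrix.smul_mulVec,
    dotProduct_smul, smul_eq_mul]
  field_simp
  ring

lemma stabC_real (heig : ∀ z : ℂ, ((AC A).charpoly).IsRoot z → 0 < z.re)
    {y : ℝ} (hy : 0 ≤ y) : stabC A b (-(y : ℂ)) = ((stabR A b (-y) : ℝ) : ℂ) := by
  have hunit := one_add_det_unit A heig hy
  set Mr : Matrix (Fin s) (Fin s) ℝ := (1 : Matrix (Fin s) (Fin s) ℝ) + y • A with hMr
  have hmap : (1 : Matrix (Fin s) (Fin s) ℂ) - (-(y:ℂ)) • A.map ((↑) : ℝ → ℂ) =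
      Mr.map ((↑) : ℝ → ℂ) := by
    ext i j
    by_cases h : i = j <;>
      simp [hMr, Matrix.map_apply, Matrix.one_apply, Matrix.add_apply, Matrix.sub_apply,
        Matrix.smul_apply, h, smul_eq_mul] <;> try (push_cast; ring)
  have hmapc : ∀ P Q : Matrix (Fin s) (Fin s) ℝ,
      (P.map ((↑) : ℝ → ℂ)) * (Q.map ((↑) : ℝ → ℂ)) = (P * Q).map ((↑) : ℝ → ℂ) := by
    intro P Q
    exact (Matrix.map_mul (f := Complex.ofRealHom)).symm
  have hinvmap : (Mr.map ((↑) : ℝ → ℂ))⁻¹ = (Mr⁻¹).map ((↑) : ℝ → ℂ) := by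
    apply Matrix.inv_eq_right_inv
    rw [hmapc, Matrix.mul_nonsing_inv _ hunit]
    ext i j
    by_cases h : i = j <;> simp [Matrix.map_apply, Matrix.one_apply, h]
  unfold stabC stabR
  rw [hmap, hinvmap, neg_smul, sub_neg_eq_add, ← hMr]
  simp only [dotProduct, Matrix.mulVec, Matrix.map_apply, mul_one]
  push_cast
  ring

lemma Bu_cont : Continuous fun u => Bu A u := by
  apply continuous_pi; intro i; apply continuous_pi; intro j
  simp only [Bu, Matrix.add_apply, Matrix.smul_apply, smul_eq_mul]
  fun_prop

lemma Bu_inv_cont (heig : ∀ z : ℂ, ((AC A).charpoly).IsRoot z → 0 < z.re) :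
    ContinuousOn (fun u => (Bu A u)⁻¹) (Set.Icc (0:ℝ) 1) := by
  have h1 : (fun u => (Bu A u)⁻¹) =
      fun u => ((Bu A u).det)⁻¹ • (Bu A u).adjugate := by
    funext u
    rw [Matrix.inv_def, Ring.inverse_eq_inv']
  rw [h1]
  apply ContinuousOn.fun_smul
  · exact (((Bu_cont A).matrix_det).continuousOn).inv₀
      (fun u hu => (Bu_det_unit A heig hu.1 hu.2).ne_zero)
  · exact ((Bu_cont A).matrix_adjugate).continuousOn

lemma Bu_inv_entry_cont (heig : ∀ z : ℂ, ((AC A).charpoly).IsRoot z → 0 < z.re) (i j : Fin s) :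
    ContinuousOn (fun u => (Bu A u)⁻¹ i j) (Set.Icc (0:ℝ) 1) :=
  by exact
    ((continuous_apply j).comp (continuous_apply i)).comp_continuousOn (Bu_inv_cont A heig)

lemma GF_cont (heig : ∀ z : ℂ, ((AC A).charpoly).IsRoot z → 0 < z.re) :
    ContinuousOn (GF A b) (Set.Icc (0:ℝ) 1) := by
  unfold GF
  simp only [dotProduct, Matrix.mulVec, mul_one]
  apply continuousOn_finset_sum; intro i _
  apply ContinuousOn.mul continuousOn_const
  apply continuousOn_finset_sum; intro j _
  exact Bu_inv_entry_cont A heig i j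

def HF (u : ℝ) : ℝ :=
  b ⬝ᵥ ((A⁻¹ * ((1 : Matrix (Fin s) (Fin s) ℝ) - A) * (Bu A u)⁻¹) *ᵥ (fun _ => (1:ℝ))) +
    GF A b u

lemma rho_eq_u_H (heig : ∀ z : ℂ, ((AC A).charpoly).IsRoot z → 0 < z.re)
    (hAunit : IsUnit A.det)
    (hbA1 : b ⬝ᵥ (A⁻¹ *ᵥ (fun _ => (1:ℝ))) = 1)
    {u : ℝ} (hu0 : 0 ≤ u) (hu1 : u ≤ 1) : rhoF A b u = u * HF A b u := by
  have hBu := Bu_det_unit A heig hu0 hu1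
  have hdiff : A⁻¹ - (Bu A u)⁻¹ = u • (A⁻¹ * ((1 : Matrix (Fin s) (Fin s) ℝ) - A) * (Bu A u)⁻¹) := by
    have h2 : Bu A u - A = u • ((1 : Matrix (Fin s) (Fin s) ℝ) - A) := by
      unfold Bu
      rw [smul_sub, sub_smul, one_smul]
      abel
    calc A⁻¹ - (Bu A u)⁻¹ = A⁻¹ * (Bu A u) * (Bu A u)⁻¹ - A⁻¹ * A * (Bu A u)⁻¹ := by
          rw [Matrix.mul_assoc, Matrix.mul_nonsing_inv _ hBu, Matrix.nonsing_inv_mul _ hAunit,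
            Matrix.mul_one, Matrix.one_mul]
      _ = A⁻¹ * (Bu A u - A) * (Bu A u)⁻¹ := by
          rw [Matrix.mul_sub, Matrix.sub_mul]
      _ = u • (A⁻¹ * ((1 : Matrix (Fin s) (Fin s) ℝ) - A) * (Bu A u)⁻¹) := by
          rw [h2, Matrix.mul_smul, Matrix.smul_mul]
  have key : 1 - GF A b u =
      u * (b ⬝ᵥ ((A⁻¹ * ((1 : Matrix (Fin s) (Fin s) ℝ) - A) * (Bu A u)⁻¹) *ᵥ (fun _ => (1:ℝ)))) := by
    have h3 : b ⬝ᵥ ((A⁻¹ - (Bu A u)⁻¹) *ᵥ (fun _ => (1:ℝ))) = 1 - GF A b u := by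
      rw [Matrix.sub_mulVec, dotProduct_sub, hbA1]; rfl
    rw [← h3, hdiff, Matrix.smul_mulVec, dotProduct_smul, smul_eq_mul]
  unfold rhoF HF
  nlinarith [key]

lemma abs_rho_le_C0 (heig : ∀ z : ℂ, ((AC A).charpoly).IsRoot z → 0 < z.re)
    (hAunit : IsUnit A.det)
    (hbA1 : b ⬝ᵥ (A⁻¹ *ᵥ (fun _ => (1:ℝ))) = 1) :
    ∃ C₀ : ℝ, 0 ≤ C₀ ∧ ∀ u ∈ Set.Icc (0:ℝ) 1, |rhoF A b u| ≤ C₀ * u := by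
  have hHcont : ContinuousOn (HF A b) (Set.Icc (0:ℝ) 1) := by
    unfold HF
    apply ContinuousOn.add _ (GF_cont A b heig)
    simp only [dotProduct, Matrix.mulVec, Matrix.mul_apply, mul_one]
    apply continuousOn_finset_sum; intro i _
    apply ContinuousOn.mul continuousOn_const
    apply continuousOn_finset_sum; intro j _
    apply continuousOn_finset_sum; intro k _
    exact ContinuousOn.mul continuousOn_const (Bu_inv_entry_cont A heig k j)
  obtain ⟨u₀, hu₀, hmax⟩ := isCompact_Icc.exists_isMaxOn (Set.nonempty_Icc.2 zero_le_one)
    hHcont.abs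
  refine ⟨|HF A b u₀|, abs_nonneg _, fun u hu => ?_⟩
  rw [rho_eq_u_H A b heig hAunit hbA1 hu.1 hu.2, abs_mul, abs_of_nonneg hu.1, mul_comm]
  exact mul_le_mul_of_nonneg_right (hmax hu) hu.1

lemma abs_rho_le_one (heig : ∀ z : ℂ, ((AC A).charpoly).IsRoot z → 0 < z.re)
    (hAstab : ∀ z : ℂ, z.re ≤ 0 → ‖stabC A b z‖ ≤ 1)
    {u : ℝ} (hu0 : 0 < u) (hu1 : u ≤ 1) : |rhoF A b u| ≤ 1 := by
  set y := (1 - u) / u with hy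
  have hy0 : 0 ≤ y := div_nonneg (by linarith) (le_of_lt hu0)
  have huy : 1 / (1 + y) = u := by
    rw [hy]; field_simp; ring
  have h1 : rhoF A b u = stabR A b (-y) := by rw [stabR_eq_rho A b heig hy0, huy]
  have h2 := hAstab (-(y:ℂ)) (by simpa using hy0)
  rw [stabC_real A b heig hy0, Complex.norm_real, Real.norm_eq_abs] at h2
  rw [h1]; exact h2

lemma abs_rho_lt_one (heig : ∀ z : ℂ, ((AC A).charpoly).IsRoot z → 0 < z.re)
    (hAstab : ∀ z : ℂ, z.re ≤ 0 → ‖stabC A b z‖ ≤ 1)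
    (hAunit : IsUnit A.det)
    (hbA1 : b ⬝ᵥ (A⁻¹ *ᵥ (fun _ => (1:ℝ))) = 1)
    {u : ℝ} (hu0 : 0 < u) (hu1 : u < 1) : |rhoF A b u| < 1 := by
  rcases lt_or_ge (|rhoF A b u|) 1 with h | h
  · exact h
  exfalso
  have heq1 : |rhoF A b u| = 1 :=
    le_antisymm (abs_rho_le_one A b heig hAstab hu0 (le_of_lt hu1)) h
  obtain ⟨C₀, hC₀0, hC₀⟩ := abs_rho_le_C0 A b heig hAunit hbA1
  set y₀ := (1 - u) / u with hy₀def
  have hy₀ : 0 < y₀ := div_pos (by linarith) hu0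
  have huy₀ : 1 / (1 + y₀) = u := by rw [hy₀def]; field_simp; ring
  -- max modulus
  have hU : IsOpen {z : ℂ | z.re < 0} := isOpen_lt Complex.continuous_re continuous_const
  have hUconn : IsPreconnected {z : ℂ | z.re < 0} := by
    apply Convex.isPreconnected
    exact convex_halfSpace_re_lt 0
  have hmem : (-(y₀:ℂ)) ∈ {z : ℂ | z.re < 0} := by simpa using hy₀
  have habs0 : ‖stabC A b (-(y₀:ℂ))‖ = 1 := by
    rw [stabC_real A b heig (le_of_lt hy₀), Complex.norm_real, Real.norm_eq_abs,
      stabR_eq_rho A b heig (le_of_lt hy₀), huy₀, heq1]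
  have hmax : IsMaxOn (norm ∘ stabC A b) {z : ℂ | z.re < 0} (-(y₀:ℂ)) := by
    intro z hz
    simp only [Function.comp_apply, habs0]
    exact hAstab z (le_of_lt hz)
  have heqOn := Complex.eqOn_of_isPreconnected_of_isMaxOn_norm hUconn hU
    (stabC_diffOn A b heig) hmem hmax
  -- evaluate at a small u₁
  set u₁ := 1 / (2 * (C₀ + 1)) with hu₁def
  have hu₁0 : 0 < u₁ := by positivity
  have hu₁1 : u₁ < 1 := by
    rw [hu₁def, div_lt_one (by positivity)]; linarith
  set y₁ := (1 - u₁) / u₁ with hy₁def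
  have hy₁ : 0 < y₁ := div_pos (by linarith) hu₁0
  have huy₁ : 1 / (1 + y₁) = u₁ := by rw [hy₁def]; field_simp; ring
  have hmem₁ : (-(y₁:ℂ)) ∈ {z : ℂ | z.re < 0} := by simpa using hy₁
  have hval := heqOn hmem₁
  simp only [Function.const_apply] at hval
  have habs₁ : |rhoF A b u₁| = 1 := by
    have : ‖stabC A b (-(y₁:ℂ))‖ = 1 := by rw [hval, habs0]
    rwa [stabC_real A b heig (le_of_lt hy₁), Complex.norm_real, Real.norm_eq_abs,
      stabR_eq_rho A b heig (le_of_lt hy₁), huy₁] at this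
  have hsmall : |rhoF A b u₁| ≤ C₀ * u₁ :=
    hC₀ u₁ ⟨le_of_lt hu₁0, le_of_lt hu₁1⟩
  have : C₀ * u₁ ≤ 1/2 := by
    rw [hu₁def]
    rw [mul_one_div, div_le_div_iff₀ (by positivity) (by norm_num)]
    linarith
  linarith [habs₁ ▸ hsmall]

lemma GF_one (hb1 : ∑ i, b i = 1) : GF A b 1 = 1 := by
  unfold GF Bu
  simp [Matrix.one_mulVec, dotProduct, hb1]

lemma exists_delta (heig : ∀ z : ℂ, ((AC A).charpoly).IsRoot z → 0 < z.re)
    (hb1 : ∑ i, b i = 1) :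
    ∃ δ : ℝ, 0 < δ ∧ δ ≤ 1/2 ∧ ∀ u : ℝ, 1 - δ ≤ u → u ≤ 1 →
      1/2 ≤ GF A b u ∧ GF A b u ≤ 3/2 := by
  have h1 : (1:ℝ) ∈ Set.Icc (0:ℝ) 1 := by norm_num
  have hc := (GF_cont A b heig) 1 h1
  rw [Metric.continuousWithinAt_iff] at hc
  obtain ⟨δ₁, hδ₁0, hδ₁⟩ := hc (1/2) (by norm_num)
  refine ⟨min (δ₁/2) (1/2), by positivity, min_le_right _ _, fun u hu1 hu2 => ?_⟩
  have hmr := min_le_right (δ₁/2) (1/2)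
  have hml := min_le_left (δ₁/2) (1/2)
  have hm0 : 0 < min (δ₁/2) (1/2) := by positivity
  have hu0 : (0:ℝ) ≤ u := by linarith
  have hmem : u ∈ Set.Icc (0:ℝ) 1 := ⟨hu0, hu2⟩
  have hdist : dist u 1 < δ₁ := by
    rw [Real.dist_eq, abs_lt]
    constructor
    · linarith
    · linarith
  have := hδ₁ hmem hdist
  rw [Real.dist_eq, GF_one A b hb1] at this
  have habs := abs_lt.1 this
  constructor <;> linarith [habs.1, habs.2]

lemma exists_a (heig : ∀ z : ℂ, ((AC A).charpoly).IsRoot z → 0 < z.re)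
    (hAstab : ∀ z : ℂ, z.re ≤ 0 → ‖stabC A b z‖ ≤ 1)
    (hAunit : IsUnit A.det)
    (hbA1 : b ⬝ᵥ (A⁻¹ *ᵥ (fun _ => (1:ℝ))) = 1)
    (hb1 : ∑ i, b i = 1) :
    ∃ a : ℝ, 0 < a ∧ a ≤ 1 ∧ ∀ y : ℝ, 0 < y → |stabR A b (-y)| * (1 + a * y) ≤ 1 := by
  obtain ⟨C₀, hC₀0, hC₀⟩ := abs_rho_le_C0 A b heig hAunit hbA1
  obtain ⟨δ, hδ0, hδhalf, hδ⟩ := exists_delta A b heig hb1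
  obtain ⟨δ₀, hδ₀def⟩ : ∃ δ₀ : ℝ, δ₀ = 1 / (2 * (C₀ + 1)) := ⟨_, rfl⟩
  have hδ₀0 : 0 < δ₀ := by rw [hδ₀def]; positivity
  have hC₀δ₀ : 2 * C₀ * δ₀ ≤ 1 := by
    rw [hδ₀def, mul_one_div, div_le_one (by positivity)]
    linarith
  have hmid : ∃ m : ℝ, 0 ≤ m ∧ m < 1 ∧ ∀ u ∈ Set.Icc δ₀ (1 - δ), |rhoF A b u| ≤ m := by
    by_cases hK : δ₀ ≤ 1 - δ
    · have hsub : Set.Icc δ₀ (1 - δ) ⊆ Set.Icc (0:ℝ) 1 := by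
        intro u hu
        exact ⟨le_trans (le_of_lt hδ₀0) hu.1, by linarith [hu.2]⟩
      have hcont : ContinuousOn (fun u => |rhoF A b u|) (Set.Icc δ₀ (1 - δ)) := by
        apply ContinuousOn.abs
        unfold rhoF
        exact continuousOn_const.sub
          ((continuousOn_const.sub continuousOn_id).mul ((GF_cont A b heig).mono hsub))
      obtain ⟨u₀, hu₀, hmax⟩ := isCompact_Icc.exists_isMaxOn (Set.nonempty_Icc.2 hK) hcont
      refine ⟨|rhoF A b u₀|, abs_nonneg _, ?_, fun u hu => hmax hu⟩
      exact abs_rho_lt_one A b heig hAstab hAunit hbA1 (lt_of_lt_of_le hδ₀0 hu₀.1)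
        (lt_of_le_of_lt hu₀.2 (by linarith))
    · exact ⟨0, le_rfl, by norm_num, fun u hu => absurd (hu.1.trans hu.2) hK⟩
  obtain ⟨m, hm0, hm1, hm⟩ := hmid
  obtain ⟨a, hadef⟩ : ∃ a : ℝ, a = min (min δ₀ ((1 - m) * δ₀)) (1/4) := ⟨_, rfl⟩
  have ha0 : 0 < a := by
    rw [hadef]
    exact lt_min (lt_min hδ₀0 (mul_pos (by linarith) hδ₀0)) (by norm_num)
  have haδ₀ : a ≤ δ₀ := by rw [hadef]; exact le_trans (min_le_left _ _) (min_le_left _ _)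
  have ham : a ≤ (1 - m) * δ₀ := by
    rw [hadef]; exact le_trans (min_le_left _ _) (min_le_right _ _)
  have ha4 : a ≤ 1/4 := by rw [hadef]; exact min_le_right _ _
  have ha1 : a ≤ 1 := by linarith
  refine ⟨a, ha0, ha1, fun y hy => ?_⟩
  obtain ⟨u, hudef⟩ : ∃ u : ℝ, u = 1 / (1 + y) := ⟨_, rfl⟩
  have h1y : (0:ℝ) < 1 + y := by linarith
  have hu0 : 0 < u := by rw [hudef]; positivity
  have hu1 : u < 1 := by rw [hudef, div_lt_one h1y]; linarith
  have huy : u * y = 1 - u := by rw [hudef]; field_simp; ring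
  have hrw : stabR A b (-y) = rhoF A b u := by
    rw [stabR_eq_rho A b heig (le_of_lt hy), hudef]
  rw [hrw]
  have hv0 : (0:ℝ) ≤ 1 - u := by linarith
  have hav : (0:ℝ) ≤ a * (1 - u) := mul_nonneg ha0.le hv0
  have h4 : a * (1 - u) ≤ a := by
    calc a * (1 - u) ≤ a * 1 := mul_le_mul_of_nonneg_left (by linarith) ha0.le
      _ = a := mul_one a
  have h3 : (0:ℝ) ≤ u + a * (1 - u) := add_nonneg hu0.le hav
  have hkey : |rhoF A b u| * (u + a * (1 - u)) ≤ u := by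
    rcases le_or_gt u δ₀ with hcase1 | hcase1
    · have hb := hC₀ u ⟨le_of_lt hu0, le_of_lt hu1⟩
      have h2 : u + a * (1 - u) ≤ 2 * δ₀ := by linarith
      calc |rhoF A b u| * (u + a * (1 - u)) ≤ (C₀ * u) * (2 * δ₀) :=
            mul_le_mul hb h2 h3 (by positivity)
        _ = u * (2 * C₀ * δ₀) := by ring
        _ ≤ u * 1 := mul_le_mul_of_nonneg_left hC₀δ₀ hu0.le
        _ = u := mul_one u
    · rcases le_or_gt u (1 - δ) with hcase2 | hcase2
      · have hb := hm u ⟨le_of_lt hcase1, hcase2⟩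
        have h5 : m * (a * (1 - u)) ≤ 1 * (a * (1 - u)) :=
          mul_le_mul_of_nonneg_right hm1.le hav
        have h6 : (1 - m) * δ₀ ≤ (1 - m) * u :=
          mul_le_mul_of_nonneg_left hcase1.le (by linarith)
        calc |rhoF A b u| * (u + a * (1 - u)) ≤ m * (u + a * (1 - u)) :=
              mul_le_mul_of_nonneg_right hb h3
          _ = m * u + m * (a * (1 - u)) := by ring
          _ ≤ m * u + a * (1 - u) := by linarith
          _ ≤ m * u + a := by linarith
          _ ≤ m * u + (1 - m) * δ₀ := by linarith
          _ ≤ m * u + (1 - m) * u := by linarith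
          _ = u := by ring
      · obtain ⟨hg1, hg2⟩ := hδ u (by linarith) (le_of_lt hu1)
        have hρ : |rhoF A b u| ≤ 1 - (1 - u) / 2 := by
          rw [abs_le]
          constructor
          · unfold rhoF; nlinarith
          · unfold rhoF; nlinarith
        have hv2 : 1 - u ≤ 1/2 := by linarith
        have hinner : a - 1/2 + (1 - u)/2 - a * (1 - u)/2 ≤ 0 := by linarith
        have hprod := mul_le_mul_of_nonneg_left hinner hv0
        rw [mul_zero] at hprod
        have e1 : (1 - (1 - u)/2) * (u + a * (1 - u)) =
            u + (1 - u) * (a - 1/2 + (1 - u)/2 - a * (1 - u)/2) := by ring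
        calc |rhoF A b u| * (u + a * (1 - u)) ≤ (1 - (1 - u)/2) * (u + a * (1 - u)) :=
              mul_le_mul_of_nonneg_right hρ h3
          _ ≤ u := by rw [e1]; linarith
  have hfin : u * (|rhoF A b u| * (1 + a * y)) ≤ u * 1 := by
    have hexp : u * (|rhoF A b u| * (1 + a * y)) = |rhoF A b u| * (u + a * (u * y)) := by ring
    rw [hexp, huy, mul_one]
    exact hkey
  exact le_of_mul_le_mul_left hfin hu0

lemma prod_one_add_le (F : Finset ℕ) (v : ℕ → ℝ) (hv : ∀ l ∈ F, 0 ≤ v l) :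
    1 + ∑ l ∈ F, v l ≤ ∏ l ∈ F, (1 + v l) := by
  induction F using Finset.cons_induction with
  | empty => simp
  | cons j F hj ih =>
    rw [Finset.sum_cons, Finset.prod_cons]
    have hvj : 0 ≤ v j := hv j (Finset.mem_cons_self j F)
    have hF : ∀ l ∈ F, 0 ≤ v l := fun l hl => hv l (Finset.mem_cons_of_mem hl)
    have ih' := ih hF
    have hsum : 0 ≤ ∑ l ∈ F, v l := Finset.sum_nonneg hF
    nlinarith

lemma telescope_tau (t : ℕ → ℝ) (j n : ℕ) (hj : 1 ≤ j) (hn : j ≤ n) :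
    ∑ l ∈ Finset.Icc j n, (t l - t (l - 1)) = t n - t (j - 1) := by
  induction n, hn using Nat.le_induction with
  | base =>
    rw [Finset.Icc_self, Finset.sum_singleton]
  | succ n hn ih =>
    rw [Finset.sum_Icc_succ_top (by omega), ih]
    have : n + 1 - 1 = n := by omega
    rw [this]
    ring

lemma phi_integrable {α : ℝ} (hα0 : 0 < α) (hα1 : α < 1) {D : ℝ} (hD : 0 < D) :
    IntegrableOn (fun x : ℝ => x ^ (-α) * (1 + D * x)⁻¹) (Ioi (0:ℝ)) := by
  have hm : (0:ℝ) < D⁻¹ := by positivity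
  have hmeas : ∀ S : Set ℝ, S ⊆ Ioi (0:ℝ) → MeasurableSet S →
      AEStronglyMeasurable (fun x : ℝ => x ^ (-α) * (1 + D * x)⁻¹) (volume.restrict S) := by
    intro S hS hSm
    apply ContinuousOn.aestronglyMeasurable _ hSm
    apply ContinuousOn.mul
    · apply ContinuousOn.rpow_const continuousOn_id
      intro x hx
      exact Or.inl (ne_of_gt (hS hx))
    · apply ContinuousOn.inv₀ (by fun_prop)
      intro x hx
      have hx0 : (0:ℝ) < x := hS hx
      positivity
  have key1 : IntegrableOn (fun x : ℝ => x ^ (-α) * (1 + D * x)⁻¹) (Ioc (0:ℝ) D⁻¹) := by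
    have hb : IntegrableOn (fun x : ℝ => x ^ (-α)) (Ioc (0:ℝ) D⁻¹) := by
      have := intervalIntegral.intervalIntegrable_rpow' (a := 0) (b := D⁻¹) (r := -α)
        (by linarith)
      rwa [intervalIntegrable_iff_integrableOn_Ioc_of_le (le_of_lt hm)] at this
    apply Integrable.mono' hb (hmeas _ Ioc_subset_Ioi_self measurableSet_Ioc)
    filter_upwards [ae_restrict_mem measurableSet_Ioc] with x hx
    have hx0 : (0:ℝ) < x := hx.1
    have h1 : (0:ℝ) < 1 + D * x := by positivity
    rw [Real.norm_eq_abs, abs_mul, abs_of_nonneg (Real.rpow_nonneg hx0.le _),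
      abs_of_nonneg (by positivity : (0:ℝ) ≤ (1 + D * x)⁻¹)]
    have h2 : (1 + D * x)⁻¹ ≤ 1 := by
      rw [inv_le_one_iff₀]; right; nlinarith
    nlinarith [Real.rpow_nonneg hx0.le (-α)]
  have key2 : IntegrableOn (fun x : ℝ => x ^ (-α) * (1 + D * x)⁻¹) (Ioi D⁻¹) := by
    have hb : IntegrableOn (fun x : ℝ => D⁻¹ * x ^ (-α - 1)) (Ioi D⁻¹) :=
      Integrable.const_mul (integrableOn_Ioi_rpow_of_lt (by linarith) hm) _
    apply Integrable.mono' hb (hmeas _ (Ioi_subset_Ioi (le_of_lt hm)) measurableSet_Ioi)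
    filter_upwards [ae_restrict_mem measurableSet_Ioi] with x hx
    have hx0 : (0:ℝ) < x := lt_trans hm hx
    have h1 : (0:ℝ) < 1 + D * x := by positivity
    rw [Real.norm_eq_abs, abs_mul, abs_of_nonneg (Real.rpow_nonneg hx0.le _),
      abs_of_nonneg (by positivity : (0:ℝ) ≤ (1 + D * x)⁻¹)]
    have h2 : (1 + D * x)⁻¹ ≤ (D * x)⁻¹ := by
      apply inv_anti₀ (by positivity)
      linarith
    calc x ^ (-α) * (1 + D * x)⁻¹ ≤ x ^ (-α) * (D * x)⁻¹ :=
          mul_le_mul_of_nonneg_left h2 (Real.rpow_nonneg hx0.le _)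
      _ = D⁻¹ * (x ^ (-α) * x⁻¹) := by rw [mul_inv]; ring
      _ = D⁻¹ * x ^ (-α - 1) := by
          rw [← Real.rpow_neg_one x, ← Real.rpow_add hx0]
          ring_nf
  have hunion : Ioc (0:ℝ) D⁻¹ ∪ Ioi D⁻¹ = Ioi (0:ℝ) := Ioc_union_Ioi_eq_Ioi (le_of_lt hm)
  rw [← hunion]
  exact key1.union key2

lemma phi_integral_le {α : ℝ} (hα0 : 0 < α) (hα1 : α < 1) {D : ℝ} (hD : 0 < D) :
    ∫ x in Ioi (0:ℝ), x ^ (-α) * (1 + D * x)⁻¹ ≤ D ^ (α - 1) * (1/(1-α) + 1/α) := by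
  have hm : (0:ℝ) < D⁻¹ := by positivity
  have hunion : Ioc (0:ℝ) D⁻¹ ∪ Ioi D⁻¹ = Ioi (0:ℝ) := Ioc_union_Ioi_eq_Ioi (le_of_lt hm)
  have hint := phi_integrable hα0 hα1 hD
  have key1 : IntegrableOn (fun x : ℝ => x ^ (-α) * (1 + D * x)⁻¹) (Ioc (0:ℝ) D⁻¹) :=
    hint.mono_set (by rw [← hunion]; exact subset_union_left)
  have key2 : IntegrableOn (fun x : ℝ => x ^ (-α) * (1 + D * x)⁻¹) (Ioi D⁻¹) :=
    hint.mono_set (by rw [← hunion]; exact subset_union_right)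
  have hsplit : ∫ x in Ioi (0:ℝ), x ^ (-α) * (1 + D * x)⁻¹ =
      (∫ x in Ioc (0:ℝ) D⁻¹, x ^ (-α) * (1 + D * x)⁻¹) +
      ∫ x in Ioi D⁻¹, x ^ (-α) * (1 + D * x)⁻¹ := by
    rw [← hunion]
    exact setIntegral_union (Ioc_disjoint_Ioi le_rfl) measurableSet_Ioi key1 key2
  -- first piece
  have hb1 : IntegrableOn (fun x : ℝ => x ^ (-α)) (Ioc (0:ℝ) D⁻¹) := by
    have := intervalIntegral.intervalIntegrable_rpow' (a := 0) (b := D⁻¹) (r := -α)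
      (by linarith)
    rwa [intervalIntegrable_iff_integrableOn_Ioc_of_le (le_of_lt hm)] at this
  have hle1 : (∫ x in Ioc (0:ℝ) D⁻¹, x ^ (-α) * (1 + D * x)⁻¹) ≤
      ∫ x in Ioc (0:ℝ) D⁻¹, x ^ (-α) := by
    apply setIntegral_mono_on key1 hb1 measurableSet_Ioc
    intro x hx
    have hx0 : (0:ℝ) < x := hx.1
    have h1 : (0:ℝ) < 1 + D * x := by positivity
    have h2 : (1 + D * x)⁻¹ ≤ 1 := by
      rw [inv_le_one_iff₀]; right; nlinarith
    nlinarith [Real.rpow_nonneg hx0.le (-α)]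
  have heval1 : ∫ x in Ioc (0:ℝ) D⁻¹, x ^ (-α) = D ^ (α - 1) / (1 - α) := by
    have h0 : (∫ x in (0:ℝ)..D⁻¹, x ^ (-α)) = ∫ x in Ioc (0:ℝ) D⁻¹, x ^ (-α) :=
      intervalIntegral.integral_of_le (le_of_lt hm)
    rw [← h0, integral_rpow (Or.inl (by linarith))]
    rw [Real.zero_rpow (ne_of_gt (by linarith : (0:ℝ) < -α + 1)), sub_zero,
      Real.inv_rpow hD.le, ← Real.rpow_neg hD.le,
      (by ring : -(-α + 1) = α - 1), (by ring : -α + 1 = 1 - α)]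
  -- second piece
  have hb2 : IntegrableOn (fun x : ℝ => D⁻¹ * x ^ (-α - 1)) (Ioi D⁻¹) :=
    Integrable.const_mul (integrableOn_Ioi_rpow_of_lt (by linarith) hm) _
  have hle2 : (∫ x in Ioi D⁻¹, x ^ (-α) * (1 + D * x)⁻¹) ≤
      ∫ x in Ioi D⁻¹, D⁻¹ * x ^ (-α - 1) := by
    apply setIntegral_mono_on key2 hb2 measurableSet_Ioi
    intro x hx
    have hx0 : (0:ℝ) < x := lt_trans hm hx
    have h2 : (1 + D * x)⁻¹ ≤ (D * x)⁻¹ := by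
      apply inv_anti₀ (by positivity)
      linarith
    calc x ^ (-α) * (1 + D * x)⁻¹ ≤ x ^ (-α) * (D * x)⁻¹ :=
          mul_le_mul_of_nonneg_left h2 (Real.rpow_nonneg hx0.le _)
      _ = D⁻¹ * (x ^ (-α) * x⁻¹) := by rw [mul_inv]; ring
      _ = D⁻¹ * x ^ (-α - 1) := by
          rw [← Real.rpow_neg_one x, ← Real.rpow_add hx0]
          ring_nf
  have heval2 : ∫ x in Ioi D⁻¹, D⁻¹ * x ^ (-α - 1) = D ^ (α - 1) / α := by
    rw [integral_const_mul, integral_Ioi_rpow_of_lt (by linarith) hm]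
    rw [(by ring : -α - 1 + 1 = -α), Real.inv_rpow hD.le, ← Real.rpow_neg hD.le, neg_neg]
    have hDa : D⁻¹ * D ^ α = D ^ (α - 1) := by
      rw [← Real.rpow_neg_one D, ← Real.rpow_add hD, (by ring : (-1:ℝ) + α = α - 1)]
    rw [neg_div_neg_eq, mul_div_assoc', hDa]
  calc ∫ x in Ioi (0:ℝ), x ^ (-α) * (1 + D * x)⁻¹ ≤
        D ^ (α - 1) / (1 - α) + D ^ (α - 1) / α := by
        rw [hsplit]
        apply add_le_add (heval1 ▸ hle1) (heval2 ▸ hle2)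
    _ = D ^ (α - 1) * (1/(1-α) + 1/α) := by ring

lemma vdot_matVec_norm {X : Type*} [NormedAddCommGroup X] [NormedSpace ℝ X]
    (M : Matrix (Fin s) (Fin s) ℝ) (v : Fin s → X) (S : ℝ) (hv : ∀ i, ‖v i‖ ≤ S)
    (hS : 0 ≤ S) :
    ‖vdot b (matVec M v)‖ ≤ (∑ i, ∑ k, |b i| * |M i k|) * S := by
  unfold vdot matVec
  calc ‖∑ i, b i • ∑ k, M i k • v k‖ ≤ ∑ i, ‖b i • ∑ k, M i k • v k‖ := norm_sum_le _ _
    _ ≤ ∑ i, |b i| * ∑ k, |M i k| * S := by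
        apply Finset.sum_le_sum
        intro i _
        rw [norm_smul, Real.norm_eq_abs]
        apply mul_le_mul_of_nonneg_left _ (abs_nonneg _)
        calc ‖∑ k, M i k • v k‖ ≤ ∑ k, ‖M i k • v k‖ := norm_sum_le _ _
          _ ≤ ∑ k, |M i k| * S := by
              apply Finset.sum_le_sum
              intro k _
              rw [norm_smul, Real.norm_eq_abs]
              exact mul_le_mul_of_nonneg_left (hv k) (abs_nonneg _)
    _ = (∑ i, ∑ k, |b i| * |M i k|) * S := by
        rw [Finset.sum_mul]
        congr 1
        funext i
        rw [Finset.mul_sum, Finset.sum_mul]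
        congr 1
        funext k
        ring

lemma exists_CB (heig : ∀ z : ℂ, ((AC A).charpoly).IsRoot z → 0 < z.re) :
    ∃ CB : ℝ, 0 < CB ∧ ∀ y : ℝ, 0 < y →
      (∑ i, ∑ k, |b i| * |((1 : Matrix (Fin s) (Fin s) ℝ) + y • A)⁻¹ i k|) ≤
        CB * (1 + y)⁻¹ := by
  have hκcont : ContinuousOn (fun u => ∑ i, ∑ k, |b i| * |(Bu A u)⁻¹ i k|)
      (Set.Icc (0:ℝ) 1) := by
    apply continuousOn_finset_sum; intro i _
    apply continuousOn_finset_sum; intro k _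
    exact continuousOn_const.mul (Bu_inv_entry_cont A heig i k).abs
  obtain ⟨u₀, hu₀, hmax⟩ := isCompact_Icc.exists_isMaxOn (Set.nonempty_Icc.2 zero_le_one)
    hκcont
  set κ₀ := ∑ i, ∑ k, |b i| * |(Bu A u₀)⁻¹ i k| with hκ₀
  have hκ₀0 : 0 ≤ κ₀ := by
    apply Finset.sum_nonneg; intro i _
    apply Finset.sum_nonneg; intro k _
    positivity
  refine ⟨κ₀ + 1, by positivity, fun y hy => ?_⟩
  have h1y : (0:ℝ) < 1 + y := by linarith
  have hu : (0:ℝ) < 1/(1+y) ∧ 1/(1+y) ≤ 1 := by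
    constructor
    · positivity
    · rw [div_le_one h1y]; linarith
  rw [inv_one_add A heig (le_of_lt hy)]
  have : ∀ i k, |((1/(1+y)) • (Bu A (1/(1+y)))⁻¹) i k| =
      (1/(1+y)) * |(Bu A (1/(1+y)))⁻¹ i k| := by
    intro i k
    rw [Matrix.smul_apply, smul_eq_mul, abs_mul, abs_of_pos hu.1]
  calc (∑ i, ∑ k, |b i| * |((1/(1+y)) • (Bu A (1/(1+y)))⁻¹) i k|)
      = (1/(1+y)) * ∑ i, ∑ k, |b i| * |(Bu A (1/(1+y)))⁻¹ i k| := by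
        rw [Finset.mul_sum]
        congr 1; funext i
        rw [Finset.mul_sum]
        congr 1; funext k
        rw [this i k]; ring
    _ ≤ (1/(1+y)) * (κ₀ + 1) := by
        apply mul_le_mul_of_nonneg_left _ (le_of_lt hu.1)
        have h5 := hmax ⟨le_of_lt hu.1, hu.2⟩
        simp only [Set.mem_setOf_eq] at h5
        rw [← hκ₀] at h5
        linarith
    _ = (κ₀ + 1) * (1 + y)⁻¹ := by rw [one_div]; ring

lemma mesh_mono {N : ℕ} {t : ℕ → ℝ} (h0 : ∀ j, j < N → t j < t (j+1))
    {i j : ℕ} (hij : i ≤ j) (hj : j ≤ N) : t i ≤ t j := by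
  induction j with
  | zero =>
    have : i = 0 := by omega
    rw [this]
  | succ k ih =>
    rcases Nat.eq_or_lt_of_le hij with h | h
    · rw [h]
    · have hik : i ≤ k := by omega
      have := ih hik (by omega)
      have h2 := h0 k (by omega)
      linarith

lemma biSup_norm_facts {X : Type*} [NormedAddCommGroup X] {f : ℝ → X} {a b : ℝ}
    (hab : a ≤ b) (hf : ContinuousOn f (Set.Icc a b)) :
    (∀ σ ∈ Set.Icc a b, ‖f σ‖ ≤ ⨆ σ ∈ Set.Icc a b, ‖f σ‖) ∧
      0 ≤ ⨆ σ ∈ Set.Icc a b, ‖f σ‖ := by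
  obtain ⟨B, hB⟩ := (isCompact_Icc.image_of_continuousOn hf.norm).bddAbove
  simp only [upperBounds, Set.mem_image, Set.mem_setOf_eq] at hB
  have hBb : ∀ σ ∈ Set.Icc a b, ‖f σ‖ ≤ B := by
    intro σ hσ
    exact hB ⟨σ, hσ, rfl⟩
  have hbdd : BddAbove (Set.range fun σ => ⨆ _ : σ ∈ Set.Icc a b, ‖f σ‖) := by
    refine ⟨max B 0, ?_⟩
    rintro x ⟨σ, rfl⟩
    by_cases hσ : σ ∈ Set.Icc a b
    · simp only
      rw [ciSup_pos hσ]
      exact le_max_of_le_left (hBb σ hσ)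
    · simp only [hσ]
      rw [Real.iSup_of_isEmpty]
      exact le_max_right _ _
  have hmain : ∀ σ ∈ Set.Icc a b, ‖f σ‖ ≤ ⨆ σ ∈ Set.Icc a b, ‖f σ‖ := by
    intro σ hσ
    have h1 : (⨆ _ : σ ∈ Set.Icc a b, ‖f σ‖) = ‖f σ‖ := ciSup_pos hσ
    rw [← h1]
    exact le_ciSup hbdd σ
  refine ⟨hmain, ?_⟩
  have ha : a ∈ Set.Icc a b := ⟨le_rfl, hab⟩
  exact le_trans (norm_nonneg _) (hmain a ha)

lemma prod_bound (a x : ℝ) (ha0 : 0 < a) (ha1 : a ≤ 1) (hx : 0 < x) (t : ℕ → ℝ)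
    (j n : ℕ) (hj : 1 ≤ j) (hn : j ≤ n)
    (hτ : ∀ l, 1 ≤ l → l ≤ n → 0 < t l - t (l - 1)) :
    (∏ l ∈ Finset.Icc (j+1) n, (1 + a * ((t l - t (l - 1)) * x))⁻¹) *
      (1 + (t j - t (j - 1)) * x)⁻¹ ≤ (1 + (a * (t n - t (j - 1))) * x)⁻¹ := by
  have hpos : ∀ l ∈ Finset.Icc j n, 0 < 1 + a * ((t l - t (l - 1)) * x) := by
    intro l hl
    rw [Finset.mem_Icc] at hl
    have h1 := hτ l (by omega) hl.2
    have h2 := mul_pos ha0 (mul_pos h1 hx)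
    linarith
  have hτj := hτ j hj hn
  -- step 1 : replace (1+τ_j x)⁻¹ by (1+aτ_j x)⁻¹
  have hstep1 : (1 + (t j - t (j - 1)) * x)⁻¹ ≤ (1 + a * ((t j - t (j - 1)) * x))⁻¹ := by
    apply inv_anti₀ (hpos j (Finset.mem_Icc.2 ⟨le_rfl, hn⟩))
    have h3 := mul_le_mul_of_nonneg_right ha1 (le_of_lt (mul_pos hτj hx))
    rw [one_mul] at h3
    linarith
  have hprodpos : 0 < ∏ l ∈ Finset.Icc (j+1) n, (1 + a * ((t l - t (l - 1)) * x))⁻¹ := by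
    apply Finset.prod_pos
    intro l hl
    rw [Finset.mem_Icc] at hl
    have := hpos l (Finset.mem_Icc.2 ⟨by omega, hl.2⟩)
    positivity
  have hsplit : Finset.Icc j n = insert j (Finset.Icc (j+1) n) := by
    ext l
    simp only [Finset.mem_Icc, Finset.mem_insert]
    omega
  have hnotmem : j ∉ Finset.Icc (j+1) n := by
    simp only [Finset.mem_Icc]
    omega
  have heq : (∏ l ∈ Finset.Icc (j+1) n, (1 + a * ((t l - t (l - 1)) * x))⁻¹) *
      (1 + a * ((t j - t (j - 1)) * x))⁻¹ =
      (∏ l ∈ Finset.Icc j n, (1 + a * ((t l - t (l - 1)) * x)))⁻¹ := by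
    rw [hsplit, Finset.prod_insert hnotmem, mul_inv, mul_comm, Finset.prod_inv_distrib]
  have hsum : ∑ l ∈ Finset.Icc j n, a * ((t l - t (l - 1)) * x) =
      (a * (t n - t (j - 1))) * x := by
    have h1 : ∀ l, a * ((t l - t (l - 1)) * x) = (a * x) * (t l - t (l - 1)) := by
      intro l; ring
    calc ∑ l ∈ Finset.Icc j n, a * ((t l - t (l - 1)) * x)
        = ∑ l ∈ Finset.Icc j n, (a * x) * (t l - t (l - 1)) := by
          apply Finset.sum_congr rfl; intro l _; rw [h1]
      _ = (a * x) * ∑ l ∈ Finset.Icc j n, (t l - t (l - 1)) := by rw [Finset.mul_sum]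
      _ = (a * x) * (t n - t (j - 1)) := by rw [telescope_tau t j n hj hn]
      _ = (a * (t n - t (j - 1))) * x := by ring
  have hge : 1 + (a * (t n - t (j - 1))) * x ≤
      ∏ l ∈ Finset.Icc j n, (1 + a * ((t l - t (l - 1)) * x)) := by
    rw [← hsum]
    apply prod_one_add_le
    intro l hl
    have := hpos l hl
    rw [Finset.mem_Icc] at hl
    have h2 := hτ l (by omega) hl.2
    positivity
  calc (∏ l ∈ Finset.Icc (j+1) n, (1 + a * ((t l - t (l - 1)) * x))⁻¹) *
        (1 + (t j - t (j - 1)) * x)⁻¹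
      ≤ (∏ l ∈ Finset.Icc (j+1) n, (1 + a * ((t l - t (l - 1)) * x))⁻¹) *
        (1 + a * ((t j - t (j - 1)) * x))⁻¹ :=
        mul_le_mul_of_nonneg_left hstep1 hprodpos.le
    _ = (∏ l ∈ Finset.Icc j n, (1 + a * ((t l - t (l - 1)) * x)))⁻¹ := heq
    _ ≤ (1 + (a * (t n - t (j - 1))) * x)⁻¹ := by
        apply inv_anti₀ _ hge
        have hD : 0 < t n - t (j - 1) := by
          rw [← telescope_tau t j n hj hn]
          apply Finset.sum_pos
          · intro l hl
            rw [Finset.mem_Icc] at hl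
            exact hτ l (by omega) hl.2
          · exact ⟨j, Finset.mem_Icc.2 ⟨le_rfl, hn⟩⟩
        positivity

end GCQ

open GCQ

theorem gcq_stability
    {X Y : Type*} [NormedAddCommGroup X] [NormedSpace ℂ X]
    [NormedAddCommGroup Y] [NormedSpace ℂ Y] [CompleteSpace Y]
    {s : ℕ} (A : Matrix (Fin s) (Fin s) ℝ) (b c : Fin s → ℝ) (p q : ℕ)
    (hRK : RKData s A b c p q)
    (α M : ℝ) (hα0 : 0 < α) (hα1 : α < 1) (hM : 0 < M)
    (G : ℝ → X →L[ℂ] Y)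
    (hGmeas : AEStronglyMeasurable G (volume.restrict (Set.Ioi (0 : ℝ))))
    (hG : ∀ x : ℝ, 0 < x → ‖G x‖ ≤ M / Real.pi * x ^ (-α))
 :
    ∃ C : ℝ, 0 < C ∧
      ∀ (T : ℝ), 0 < T → ∀ (N : ℕ) (t : ℕ → ℝ), TimeMesh T N t →
        ∀ f : ℝ → X, ContinuousOn f (Set.Icc (0 : ℝ) T) →
          ∀ n : ℕ, 1 ≤ n → n ≤ N →
            ‖gcqU G A b c t f n‖ ≤
              C * M * ∑ j ∈ Finset.Icc 1 n, (t j - t (j - 1)) *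
                (t n - t (j - 1)) ^ (α - 1) *
                (⨆ σ ∈ Set.Icc (t (j - 1)) (t j), ‖f σ‖) := by
  classical
  have heig : ∀ z : ℂ, ((AC A).charpoly).IsRoot z → 0 < z.re := hRK.hA_eig
  have hAunit : IsUnit A.det := hRK.hA_inv
  have hb1 : ∑ i, b i = 1 := by
    have h := hRK.horder 1 le_rfl hRK.hp
    simpa using h
  have hbA1 : b ⬝ᵥ (A⁻¹ *ᵥ (fun _ => (1:ℝ))) = 1 := by
    have hbv : b = (Pi.single (⟨s-1, Nat.sub_lt hRK.hs Nat.one_pos⟩ : Fin s) (1:ℝ)) ᵥ* A := by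
      funext i
      rw [hRK.hstiff i]
      simp [Matrix.vecMul, dotProduct, Pi.single_apply]
    rw [dotProduct_mulVec, hbv, Matrix.vecMul_vecMul,
      Matrix.mul_nonsing_inv _ hAunit, Matrix.vecMul_one]
    simp [dotProduct, Pi.single_apply]
  have hc01 : ∀ i, 0 ≤ c i ∧ c i ≤ 1 := by
    intro i
    refine ⟨hRK.hc_nonneg i, ?_⟩
    have hle : i ≤ (⟨s-1, Nat.sub_lt hRK.hs Nat.one_pos⟩ : Fin s) := by
      rw [Fin.le_def]
      show (i : ℕ) ≤ s - 1
      have := i.2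
      omega
    have := hRK.hc_mono hle
    rwa [hRK.hc_last] at this
  obtain ⟨a, ha0, ha1, hstab⟩ := exists_a A b heig hRK.hAstab hAunit hbA1 hb1
  obtain ⟨CB, hCB0, hCB⟩ := exists_CB A b heig
  have hπ := Real.pi_pos
  have hKα : 0 < 1/(1-α) + 1/α := by
    have h1 : 0 < 1/(1-α) := by
      apply div_pos one_pos; linarith
    have h2 : 0 < 1/α := by positivity
    linarith
  have harp : 0 < a ^ (α - 1) := Real.rpow_pos_of_pos ha0 _
  obtain ⟨C, hCdef⟩ : ∃ C : ℝ, C = CB * a ^ (α-1) * (1/(1-α) + 1/α) / Real.pi := ⟨_, rfl⟩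
  have hC0 : 0 < C := by
    rw [hCdef]
    apply div_pos _ hπ
    exact mul_pos (mul_pos hCB0 harp) hKα
  refine ⟨C, hC0, ?_⟩
  intro T hT N t hmesh f hf n hn1 hnN
  have hτpos : ∀ l, 1 ≤ l → l ≤ N → 0 < t l - t (l - 1) := by
    intro l h1 h2
    have h3 := hmesh.hinc (l-1) (by omega)
    have h4 : l - 1 + 1 = l := by omega
    rw [h4] at h3
    linarith
  have hτn : ∀ l, 1 ≤ l → l ≤ n → 0 < t l - t (l - 1) :=
    fun l h1 h2 => hτpos l h1 (le_trans h2 hnN)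
  have hDpos : ∀ j, 1 ≤ j → j ≤ n → 0 < t n - t (j - 1) := by
    intro j h1 h2
    have h3 : t j ≤ t n := mesh_mono hmesh.hinc h2 hnN
    have := hτn j h1 h2
    linarith
  -- sup facts
  have hsupf : ∀ j, 1 ≤ j → j ≤ n →
      (∀ σ ∈ Set.Icc (t (j-1)) (t j), ‖f σ‖ ≤ ⨆ σ ∈ Set.Icc (t (j-1)) (t j), ‖f σ‖) ∧
        0 ≤ ⨆ σ ∈ Set.Icc (t (j-1)) (t j), ‖f σ‖ := by
    intro j h1 h2
    have hab : t (j-1) ≤ t j := le_of_lt (by linarith [hτn j h1 h2])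
    apply biSup_norm_facts hab
    apply hf.mono
    intro σ hσ
    constructor
    · rw [← hmesh.h0]
      exact le_trans (mesh_mono hmesh.hinc (Nat.zero_le _) (by omega)) hσ.1
    · rw [← hmesh.hT]
      exact le_trans hσ.2 (mesh_mono hmesh.hinc (le_trans h2 hnN) le_rfl)
  obtain ⟨S, hSdef⟩ : ∃ S : ℕ → ℝ, S = fun j => ⨆ σ ∈ Set.Icc (t (j-1)) (t j), ‖f σ‖ :=
    ⟨_, rfl⟩
  have hSle : ∀ j, 1 ≤ j → j ≤ n → ∀ σ ∈ Set.Icc (t (j-1)) (t j), ‖f σ‖ ≤ S j := by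
    intro j h1 h2
    rw [hSdef]
    exact (hsupf j h1 h2).1
  have hS0 : ∀ j, 1 ≤ j → j ≤ n → 0 ≤ S j := by
    intro j h1 h2
    rw [hSdef]
    exact (hsupf j h1 h2).2
  -- dominating function
  obtain ⟨g, hgdef⟩ : ∃ g : ℝ → ℝ, g = fun x => ∑ j ∈ Finset.Icc 1 n,
      (M / Real.pi * (CB * ((t j - t (j-1)) * S j))) *
        (x ^ (-α) * (1 + (a * (t n - t (j-1))) * x)⁻¹) := ⟨_, rfl⟩
  have hgint : IntegrableOn g (Set.Ioi (0:ℝ)) := by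
    rw [hgdef]
    apply integrable_finset_sum
    intro j hj
    rw [Finset.mem_Icc] at hj
    exact ((phi_integrable hα0 hα1 (mul_pos ha0 (hDpos j hj.1 hj.2))).const_mul _)
  -- pointwise bound
  have hae : ∀ x ∈ Set.Ioi (0:ℝ), ‖(G x) (gcqY A b c t f n x)‖ ≤ g x := by
    intro x hx
    rw [Set.mem_Ioi] at hx
    have hGx : ‖G x‖ ≤ M / Real.pi * x ^ (-α) := hG x hx
    have hxa0 : (0:ℝ) ≤ M / Real.pi * x ^ (-α) := by positivity
    have hsum : ‖gcqY A b c t f n x‖ ≤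
        ∑ j ∈ Finset.Icc 1 n, CB * ((t j - t (j-1)) * S j) *
          (1 + (a * (t n - t (j-1))) * x)⁻¹ := by
      unfold gcqY
      refine le_trans (norm_sum_le _ _) (Finset.sum_le_sum ?_)
      intro j hj
      rw [Finset.mem_Icc] at hj
      have hj1 := hj.1
      have hjn := hj.2
      have hτj := hτn j hj1 hjn
      have hyj : 0 < (t j - t (j-1)) * x := mul_pos hτj hx
      -- stage values
      have hv : ∀ i, ‖f (t (j-1) + c i * (t j - t (j-1)))‖ ≤ S j := by
        intro i
        apply hSle j hj1 hjn
        constructor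
        · nlinarith [(hc01 i).1]
        · nlinarith [(hc01 i).2]
      have hSj0 := hS0 j hj1 hjn
      -- vdot bound
      have hV : ‖vdot b (matVec (((1 : Matrix (Fin s) (Fin s) ℝ) +
          ((t j - t (j-1)) * x) • A)⁻¹)
          (fun i => f (t (j-1) + c i * (t j - t (j-1)))))‖ ≤
          CB * (1 + (t j - t (j-1)) * x)⁻¹ * S j := by
        refine le_trans (vdot_matVec_norm b _ _ (S j) hv hSj0) ?_
        exact mul_le_mul_of_nonneg_right (hCB _ hyj) hSj0
      -- product bound
      have hP : |∏ l ∈ Finset.Icc (j+1) n, stabR A b (-((t l - t (l-1)) * x))| ≤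
          ∏ l ∈ Finset.Icc (j+1) n, (1 + a * ((t l - t (l-1)) * x))⁻¹ := by
        rw [Finset.abs_prod]
        apply Finset.prod_le_prod (fun l _ => abs_nonneg _)
        intro l hl
        rw [Finset.mem_Icc] at hl
        have hyl : 0 < (t l - t (l-1)) * x := mul_pos (hτn l (by omega) hl.2) hx
        have h1pos : (0:ℝ) < 1 + a * ((t l - t (l-1)) * x) := by
          have := mul_pos ha0 hyl
          linarith
        rw [inv_eq_one_div, le_div_iff₀ h1pos]
        exact hstab _ hyl
      have hPpos : (0:ℝ) ≤ ∏ l ∈ Finset.Icc (j+1) n, (1 + a * ((t l - t (l-1)) * x))⁻¹ := by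
        apply Finset.prod_nonneg
        intro l hl
        rw [Finset.mem_Icc] at hl
        have hyl : 0 < (t l - t (l-1)) * x := mul_pos (hτn l (by omega) hl.2) hx
        have := mul_pos ha0 hyl
        positivity
      -- assemble term j
      rw [norm_smul, norm_smul, Real.norm_eq_abs, Real.norm_eq_abs,
        abs_of_pos hτj]
      calc |∏ l ∈ Finset.Icc (j+1) n, stabR A b (-((t l - t (l-1)) * x))| *
            ((t j - t (j-1)) * ‖vdot b (matVec (((1 : Matrix (Fin s) (Fin s) ℝ) +
              ((t j - t (j-1)) * x) • A)⁻¹)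
              (fun i => f (t (j-1) + c i * (t j - t (j-1)))))‖)
          ≤ (∏ l ∈ Finset.Icc (j+1) n, (1 + a * ((t l - t (l-1)) * x))⁻¹) *
            ((t j - t (j-1)) * (CB * (1 + (t j - t (j-1)) * x)⁻¹ * S j)) := by
            apply mul_le_mul hP _ (by positivity) hPpos
            exact mul_le_mul_of_nonneg_left hV (le_of_lt hτj)
        _ = (CB * ((t j - t (j-1)) * S j)) *
            ((∏ l ∈ Finset.Icc (j+1) n, (1 + a * ((t l - t (l-1)) * x))⁻¹) *
              (1 + (t j - t (j-1)) * x)⁻¹) := by ring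
        _ ≤ (CB * ((t j - t (j-1)) * S j)) * (1 + (a * (t n - t (j-1))) * x)⁻¹ := by
            apply mul_le_mul_of_nonneg_left
              (prod_bound a x ha0 ha1 hx t j n hj1 hjn hτn)
            have := mul_pos hτj (lt_of_lt_of_le (lt_of_lt_of_le hx le_rfl) le_rfl)
            positivity
    calc ‖(G x) (gcqY A b c t f n x)‖ ≤ ‖G x‖ * ‖gcqY A b c t f n x‖ :=
          (G x).le_opNorm _
      _ ≤ (M / Real.pi * x ^ (-α)) * (∑ j ∈ Finset.Icc 1 n, CB * ((t j - t (j-1)) * S j) *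
          (1 + (a * (t n - t (j-1))) * x)⁻¹) := by
          apply mul_le_mul hGx hsum (norm_nonneg _) hxa0
      _ = g x := by
          rw [hgdef, Finset.mul_sum]
          apply Finset.sum_congr rfl
          intro j hj
          ring
  -- conclude
  have hnorm : ‖gcqU G A b c t f n‖ ≤ ∫ x in Set.Ioi (0:ℝ), g x := by
    apply norm_integral_le_of_norm_le hgint
    rw [ae_restrict_iff' measurableSet_Ioi]
    exact ae_of_all _ hae
  have hgval : ∫ x in Set.Ioi (0:ℝ), g x ≤ C * M * ∑ j ∈ Finset.Icc 1 n,
      (t j - t (j - 1)) * (t n - t (j - 1)) ^ (α - 1) * S j := by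
    rw [hgdef]
    rw [integral_finset_sum]
    swap
    · intro j hj
      rw [Finset.mem_Icc] at hj
      exact ((phi_integrable hα0 hα1 (mul_pos ha0 (hDpos j hj.1 hj.2))).const_mul _)
    rw [Finset.mul_sum]
    apply Finset.sum_le_sum
    intro j hj
    rw [Finset.mem_Icc] at hj
    have hDj := hDpos j hj.1 hj.2
    have hSj0 := hS0 j hj.1 hj.2
    have hτj := hτn j hj.1 hj.2
    have hcoef : (0:ℝ) ≤ M / Real.pi * (CB * ((t j - t (j-1)) * S j)) := by positivity
    rw [integral_const_mul]
    calc M / Real.pi * (CB * ((t j - t (j-1)) * S j)) *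
          ∫ x in Set.Ioi (0:ℝ), x ^ (-α) * (1 + (a * (t n - t (j-1))) * x)⁻¹
        ≤ M / Real.pi * (CB * ((t j - t (j-1)) * S j)) *
          ((a * (t n - t (j-1))) ^ (α - 1) * (1/(1-α) + 1/α)) :=
          mul_le_mul_of_nonneg_left (phi_integral_le hα0 hα1 (mul_pos ha0 hDj)) hcoef
      _ = C * M * ((t j - t (j-1)) * (t n - t (j-1)) ^ (α - 1) * S j) := by
          rw [Real.mul_rpow (le_of_lt ha0) (le_of_lt hDj), hCdef]
          field_simp
  rw [hSdef] at hgval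
  exact le_trans hnorm hgval


end
end

section
/- Let s ≥ 1 and let A ∈ ℝ^{s×s}, b ∈ ℝ^s define the stability function R(z) = 1 + z·bᵀ(I − zA)⁻¹𝟙. Assume A is invertible, every eigenvalue of A has positive real part, |R(z)| ≤ 1 for every z ∈ ℂ with Re z ≤ 0, bᵀ𝟙 = 1 (i.e. R'(0) = 1), and bᵀA⁻¹𝟙 = 1 (i.e. R(∞) = 0). Then there exists a constant b̂ > 0 such that |R(−x)| ≤ 1/(1 + b̂·x) for all x > 0. -/
open MeasureTheory Matrix

noncomputable section

lemma charpoly_eval {n : Type*} [Fintype n] [DecidableEq n] (M : Matrix n n ℂ) (t : ℂ) :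
    M.charpoly.eval t = (Matrix.diagonal (fun _ => t) - M).det := by
  rw [Matrix.charpoly, ← Polynomial.coe_evalRingHom, RingHom.map_det]
  congr 1
  ext i j
  by_cases h : i = j <;>
    simp [h, Matrix.charmatrix_apply, Matrix.diagonal_apply, Matrix.sub_apply]

variable {s : ℕ}

/-- det (1 - z • Aℂ) ≠ 0 for re z ≤ 0. -/
lemma detC_ne {A : Matrix (Fin s) (Fin s) ℝ}
    (hA_eig : ∀ z : ℂ, (A.map ((↑) : ℝ → ℂ)).charpoly.IsRoot z → 0 < z.re)
    {z : ℂ} (hz : z.re ≤ 0) :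
    ((1 : Matrix (Fin s) (Fin s) ℂ) - z • A.map ((↑) : ℝ → ℂ)).det ≠ 0 := by
  set Ac := A.map ((↑) : ℝ → ℂ)
  rcases eq_or_ne z 0 with rfl | hz0
  · simp
  intro hdet
  have key : (1 : Matrix (Fin s) (Fin s) ℂ) - z • Ac
      = z • (Matrix.diagonal (fun _ => z⁻¹) - Ac) := by
    rw [smul_sub]
    congr 1
    ext i j
    by_cases h : i = j <;> simp [h, Matrix.diagonal_apply, Matrix.one_apply, hz0]
  rw [key, Matrix.det_smul] at hdet
  have h2 : (Matrix.diagonal (fun _ => z⁻¹) - Ac).det = 0 := by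
    have := pow_ne_zero (Fintype.card (Fin s)) hz0
    exact (mul_eq_zero.mp hdet).resolve_left this
  have hroot : Ac.charpoly.IsRoot z⁻¹ := by
    rw [Polynomial.IsRoot, charpoly_eval, h2]
  have := hA_eig _ hroot
  rw [Complex.inv_re] at this
  have hsq : 0 ≤ Complex.normSq z := Complex.normSq_nonneg z
  rcases div_pos_iff.mp this with ⟨h1, _⟩ | ⟨_, h2⟩
  · linarith
  · linarith

/-- det (ε • 1 + A) ≠ 0 for ε ≥ 0 (real). -/
lemma detR_shift_ne {A : Matrix (Fin s) (Fin s) ℝ}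
    (hA_eig : ∀ z : ℂ, (A.map ((↑) : ℝ → ℂ)).charpoly.IsRoot z → 0 < z.re)
    {ε : ℝ} (hε : 0 ≤ ε) :
    (ε • (1 : Matrix (Fin s) (Fin s) ℝ) + A).det ≠ 0 := by
  set Ac := A.map ((↑) : ℝ → ℂ)
  intro hdet
  have hmap : ((ε • (1 : Matrix (Fin s) (Fin s) ℝ) + A).map ((↑) : ℝ → ℂ))
      = (ε : ℂ) • (1 : Matrix (Fin s) (Fin s) ℂ) + Ac := by
    ext i j
    by_cases h : i = j <;>
      simp [Ac, h, Matrix.map_apply, Matrix.add_apply, Matrix.smul_apply, Matrix.one_apply]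
  have hdetC : ((ε : ℂ) • (1 : Matrix (Fin s) (Fin s) ℂ) + Ac).det = 0 := by
    have h := RingHom.map_det Complex.ofRealHom (ε • (1 : Matrix (Fin s) (Fin s) ℝ) + A)
    rw [hdet, map_zero, RingHom.mapMatrix_apply] at h
    rw [← hmap]
    exact h.symm
  have hroot : Ac.charpoly.IsRoot (-ε : ℂ) := by
    rw [Polynomial.IsRoot, charpoly_eval]
    have : (Matrix.diagonal (fun _ : Fin s => (-ε : ℂ)) - Ac)
        = -((ε : ℂ) • (1 : Matrix (Fin s) (Fin s) ℂ) + Ac) := by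
      ext i j
      by_cases h : i = j <;>
        simp [h, Matrix.diagonal_apply, Matrix.one_apply] <;> ring
    rw [this, Matrix.det_neg, hdetC, mul_zero]
  have := hA_eig _ hroot
  simp only [Complex.neg_re, Complex.ofReal_re] at this
  linarith


lemma stabC_real {A : Matrix (Fin s) (Fin s) ℝ} {b : Fin s → ℝ} {x : ℝ}
    (h : IsUnit ((1 : Matrix (Fin s) (Fin s) ℝ) - x • A).det) :
    stabC A b (x : ℂ) = (stabR A b x : ℂ) := by
  set N : Matrix (Fin s) (Fin s) ℝ := 1 - x • A with hN
  have hmap : ((1 : Matrix (Fin s) (Fin s) ℂ) - (x : ℂ) • A.map ((↑) : ℝ → ℂ))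
      = N.map ((↑) : ℝ → ℂ) := by
    ext i j
    by_cases hij : i = j <;>
      simp [hN, hij, Matrix.map_apply, Matrix.one_apply, Matrix.sub_apply, Matrix.smul_apply]
  have hinv : (N.map ((↑) : ℝ → ℂ))⁻¹ = N⁻¹.map ((↑) : ℝ → ℂ) := by
    apply Matrix.inv_eq_right_inv
    have h1 : N * N⁻¹ = 1 := Matrix.mul_nonsing_inv _ h
    have := congrArg (fun M => Complex.ofRealHom.mapMatrix M) h1
    simp [RingHom.mapMatrix_apply, Matrix.map_mul] at this; exact this
  rw [stabC, stabR, hmap, hinv]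
  push_cast [dotProduct, Matrix.mulVec, Matrix.map_apply]
  ring

/-- differentiability of determinant of a matrix-valued function. -/
lemma differentiable_det {M : ℂ → Matrix (Fin s) (Fin s) ℂ}
    (h : ∀ i j, Differentiable ℂ fun z => M z i j) :
    Differentiable ℂ fun z => (M z).det := by
  simp only [Matrix.det_apply']
  exact Differentiable.fun_sum fun σ _ =>
    Differentiable.const_mul (Differentiable.fun_finset_prod fun i _ => h _ _) _

lemma differentiable_entries :
    ∀ (A : Matrix (Fin s) (Fin s) ℝ) i j,
      Differentiable ℂ fun z : ℂ =>
        ((1 : Matrix (Fin s) (Fin s) ℂ) - z • A.map ((↑) : ℝ → ℂ)) i j := by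
  intro A i j
  have : (fun z : ℂ => ((1 : Matrix (Fin s) (Fin s) ℂ) - z • A.map ((↑) : ℝ → ℂ)) i j)
      = fun z => (1 : Matrix (Fin s) (Fin s) ℂ) i j - z * (A.map ((↑) : ℝ → ℂ)) i j := by
    funext z; simp [Matrix.sub_apply, Matrix.smul_apply]
  rw [this]
  exact (differentiable_const _).sub (differentiable_id.mul (differentiable_const _))

lemma differentiableOn_stabC {A : Matrix (Fin s) (Fin s) ℝ} {b : Fin s → ℝ}
    (hA_eig : ∀ z : ℂ, (A.map ((↑) : ℝ → ℂ)).charpoly.IsRoot z → 0 < z.re) :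
    DifferentiableOn ℂ (stabC A b) {z : ℂ | z.re < 0} := by
  set Ac := A.map ((↑) : ℝ → ℂ)
  set M : ℂ → Matrix (Fin s) (Fin s) ℂ := fun z => (1 : Matrix (Fin s) (Fin s) ℂ) - z • Ac
    with hM
  have hdet : Differentiable ℂ fun z => (M z).det :=
    differentiable_det fun i j => differentiable_entries A i j
  have hdne : ∀ z ∈ {z : ℂ | z.re < 0}, (M z).det ≠ 0 := fun z hz =>
    detC_ne hA_eig (le_of_lt hz)
  have hadj : ∀ i j, Differentiable ℂ fun z => (M z).adjugate i j := by
    intro i j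
    simp only [Matrix.adjugate_apply]
    apply differentiable_det
    intro k l
    by_cases hkj : k = j
    · subst hkj
      simp only [Matrix.updateRow_self]
      exact differentiable_const _
    · simp only [Matrix.updateRow_ne hkj]
      exact differentiable_entries A k l
  have hinv : ∀ i j, DifferentiableOn ℂ (fun z => (M z)⁻¹ i j) {z : ℂ | z.re < 0} := by
    intro i j
    have heq : ∀ z ∈ {z : ℂ | z.re < 0},
        (M z)⁻¹ i j = ((M z).det)⁻¹ * (M z).adjugate i j := by
      intro z _
      rw [Matrix.inv_def, Matrix.smul_apply, Ring.inverse_eq_inv', smul_eq_mul]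
    refine DifferentiableOn.congr ?_ heq
    exact (((hdet.differentiableOn).inv hdne).mul (hadj i j).differentiableOn)
  unfold stabC
  simp only [dotProduct, Matrix.mulVec, mul_one]
  apply DifferentiableOn.add (differentiableOn_const _)
  apply DifferentiableOn.mul differentiableOn_id
  apply DifferentiableOn.fun_sum
  intro i _
  apply DifferentiableOn.const_mul
  apply DifferentiableOn.fun_sum
  intro j _
  exact hinv i j

/-- Continuity of entries of `(ε • 1 + A)⁻¹` on `[0, ∞)`. -/
lemma contOn_shift_inv {A : Matrix (Fin s) (Fin s) ℝ}
    (hA_eig : ∀ z : ℂ, (A.map ((↑) : ℝ → ℂ)).charpoly.IsRoot z → 0 < z.re) (i j : Fin s) :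
    ContinuousOn (fun ε : ℝ => (ε • (1 : Matrix (Fin s) (Fin s) ℝ) + A)⁻¹ i j)
      (Set.Ici 0) := by
  set M : ℝ → Matrix (Fin s) (Fin s) ℝ := fun ε => ε • (1 : Matrix (Fin s) (Fin s) ℝ) + A
    with hM
  have hMc : Continuous M :=
    (continuous_id.smul continuous_const).add continuous_const
  have hdet : Continuous fun ε => (M ε).det := hMc.matrix_det
  have hadj : Continuous fun ε => (M ε).adjugate i j := (hMc.matrix_adjugate).matrix_elem i j
  have hne : ∀ ε ∈ Set.Ici (0 : ℝ), (M ε).det ≠ 0 := fun ε hε => detR_shift_ne hA_eig hε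
  have heq : ∀ ε ∈ Set.Ici (0 : ℝ),
      (M ε)⁻¹ i j = ((M ε).det)⁻¹ * (M ε).adjugate i j := by
    intro ε _
    rw [Matrix.inv_def, Matrix.smul_apply, Ring.inverse_eq_inv', smul_eq_mul]
  exact ContinuousOn.congr ((hdet.continuousOn.inv₀ hne).mul hadj.continuousOn) heq

/-- Continuity of entries of `(1 + x • A)⁻¹` on `[0, ∞)`. -/
lemma contOn_one_add_inv {A : Matrix (Fin s) (Fin s) ℝ}
    (hA_eig : ∀ z : ℂ, (A.map ((↑) : ℝ → ℂ)).charpoly.IsRoot z → 0 < z.re) (i j : Fin s) :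
    ContinuousOn (fun x : ℝ => ((1 : Matrix (Fin s) (Fin s) ℝ) + x • A)⁻¹ i j)
      (Set.Ici 0) := by
  set M : ℝ → Matrix (Fin s) (Fin s) ℝ := fun x => (1 : Matrix (Fin s) (Fin s) ℝ) + x • A
    with hM
  have hMc : Continuous M :=
    continuous_const.add (continuous_id.smul continuous_const)
  have hdet : Continuous fun x => (M x).det := hMc.matrix_det
  have hadj : Continuous fun x => (M x).adjugate i j := (hMc.matrix_adjugate).matrix_elem i j
  have hne : ∀ x ∈ Set.Ici (0 : ℝ), (M x).det ≠ 0 := by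
    intro x hx
    have : M x = (1 : Matrix (Fin s) (Fin s) ℝ) - (-x) • A := by
      ext i' j'; simp [hM]
    rw [this]
    intro h0
    apply detC_ne (z := ((-x : ℝ) : ℂ)) hA_eig (by simpa using hx)
    have hmap : ((1 : Matrix (Fin s) (Fin s) ℂ) - ((-x : ℝ) : ℂ) • A.map ((↑) : ℝ → ℂ))
        = ((1 : Matrix (Fin s) (Fin s) ℝ) - (-x) • A).map ((↑) : ℝ → ℂ) := by
      ext i' j'
      by_cases hij : i' = j' <;>
        simp [hij, Matrix.map_apply, Matrix.one_apply, Matrix.sub_apply, Matrix.smul_apply]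
    rw [hmap]
    have h := RingHom.map_det Complex.ofRealHom ((1 : Matrix (Fin s) (Fin s) ℝ) - (-x) • A)
    rw [h0, map_zero, RingHom.mapMatrix_apply] at h
    exact h.symm
  have heq : ∀ x ∈ Set.Ici (0 : ℝ),
      (M x)⁻¹ i j = ((M x).det)⁻¹ * (M x).adjugate i j := by
    intro x _
    rw [Matrix.inv_def, Matrix.smul_apply, Ring.inverse_eq_inv', smul_eq_mul]
  exact ContinuousOn.congr ((hdet.continuousOn.inv₀ hne).mul hadj.continuousOn) heq

lemma stabR_neg_eq {A : Matrix (Fin s) (Fin s) ℝ} {b : Fin s → ℝ}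
    (hA_eig : ∀ z : ℂ, (A.map ((↑) : ℝ → ℂ)).charpoly.IsRoot z → 0 < z.re)
    {x : ℝ} (hx : 0 < x) :
    stabR A b (-x) = 1 - b ⬝ᵥ ((x⁻¹ • (1 : Matrix (Fin s) (Fin s) ℝ) + A)⁻¹ *ᵥ
      (fun _ => (1 : ℝ))) := by
  set N : Matrix (Fin s) (Fin s) ℝ := x⁻¹ • (1 : Matrix (Fin s) (Fin s) ℝ) + A with hN
  have hNu : IsUnit N.det := isUnit_iff_ne_zero.mpr (detR_shift_ne hA_eig (by positivity))
  have hfac : (1 : Matrix (Fin s) (Fin s) ℝ) - (-x) • A = x • N := by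
    ext i j
    by_cases hij : i = j <;>
      (simp [hN, hij, Matrix.one_apply, mul_add, hx.ne']; try ring)
  have hinv : ((1 : Matrix (Fin s) (Fin s) ℝ) - (-x) • A)⁻¹ = x⁻¹ • N⁻¹ := by
    rw [hfac]
    apply Matrix.inv_eq_right_inv
    rw [Matrix.smul_mul, Matrix.mul_smul, smul_smul, mul_inv_cancel₀ hx.ne',
      Matrix.mul_nonsing_inv _ hNu, one_smul]
  rw [stabR, hinv]
  rw [Matrix.smul_mulVec, dotProduct_smul]
  field_simp
  rw [smul_eq_mul, ← mul_assoc, mul_one_div_cancel hx.ne', one_mul]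
  ring

lemma shift_inv_identity {A : Matrix (Fin s) (Fin s) ℝ}
    (hA_inv : IsUnit A.det)
    (hA_eig : ∀ z : ℂ, (A.map ((↑) : ℝ → ℂ)).charpoly.IsRoot z → 0 < z.re)
    {ε : ℝ} (hε : 0 ≤ ε) :
    (ε • (1 : Matrix (Fin s) (Fin s) ℝ) + A)⁻¹
      = A⁻¹ - ε • (A⁻¹ * (ε • (1 : Matrix (Fin s) (Fin s) ℝ) + A)⁻¹) := by
  set N : Matrix (Fin s) (Fin s) ℝ := ε • (1 : Matrix (Fin s) (Fin s) ℝ) + A with hN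
  have hNu : IsUnit N.det := isUnit_iff_ne_zero.mpr (detR_shift_ne hA_eig hε)
  have h1 : A⁻¹ * N = ε • A⁻¹ + 1 := by
    rw [hN, Matrix.mul_add, Matrix.mul_smul, Matrix.mul_one, Matrix.nonsing_inv_mul _ hA_inv]
  have h2 : A⁻¹ = ε • (A⁻¹ * N⁻¹) + N⁻¹ := by
    calc A⁻¹ = A⁻¹ * (N * N⁻¹) := by rw [Matrix.mul_nonsing_inv _ hNu, Matrix.mul_one]
    _ = (A⁻¹ * N) * N⁻¹ := by rw [Matrix.mul_assoc]
    _ = (ε • A⁻¹ + 1) * N⁻¹ := by rw [h1]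
    _ = ε • (A⁻¹ * N⁻¹) + N⁻¹ := by rw [Matrix.add_mul, Matrix.smul_mul, Matrix.one_mul]
  rw [eq_sub_iff_add_eq, add_comm]
  exact h2.symm

lemma stabR_rate {A : Matrix (Fin s) (Fin s) ℝ} {b : Fin s → ℝ}
    (hA_inv : IsUnit A.det)
    (hA_eig : ∀ z : ℂ, (A.map ((↑) : ℝ → ℂ)).charpoly.IsRoot z → 0 < z.re)
    (hbAinv : b ⬝ᵥ (A⁻¹ *ᵥ (fun _ => (1 : ℝ))) = 1) :
    ∃ C : ℝ, 0 < C ∧ ∀ x : ℝ, 1 ≤ x → |stabR A b (-x)| ≤ C / x := by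
  set χ : ℝ → ℝ := fun ε =>
    b ⬝ᵥ ((A⁻¹ * (ε • (1 : Matrix (Fin s) (Fin s) ℝ) + A)⁻¹) *ᵥ (fun _ => (1 : ℝ)))
    with hχ
  have hχc : ContinuousOn χ (Set.Ici 0) := by
    have : ∀ i j, ContinuousOn
        (fun ε : ℝ => (A⁻¹ * (ε • (1 : Matrix (Fin s) (Fin s) ℝ) + A)⁻¹) i j)
        (Set.Ici 0) := by
      intro i j
      simp only [Matrix.mul_apply]
      exact continuousOn_finset_sum _ fun k _ =>
        (continuousOn_const.mul (contOn_shift_inv hA_eig k j))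
    simp only [hχ, dotProduct, Matrix.mulVec, mul_one]
    exact continuousOn_finset_sum _ fun i _ => continuousOn_const.mul
      (continuousOn_finset_sum _ fun j _ => this i j)
  obtain ⟨C0, hC0⟩ := (isCompact_Icc (a := (0:ℝ)) (b := 1)).exists_bound_of_continuousOn
    (hχc.mono (by intro t ht; exact ht.1))
  refine ⟨max C0 1, lt_of_lt_of_le one_pos (le_max_right _ _), ?_⟩
  intro x hx
  have hx0 : 0 < x := lt_of_lt_of_le one_pos hx
  have hεmem : x⁻¹ ∈ Set.Icc (0:ℝ) 1 := ⟨by positivity, by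
    rw [inv_le_one_iff₀]; right; exact hx⟩
  have hval : stabR A b (-x) = x⁻¹ * χ x⁻¹ := by
    rw [stabR_neg_eq hA_eig hx0, shift_inv_identity hA_inv hA_eig (le_of_lt (by positivity))]
    rw [Matrix.sub_mulVec, dotProduct_sub, hbAinv, Matrix.smul_mulVec,
      dotProduct_smul]
    simp [hχ]
  rw [hval, abs_mul, abs_inv, abs_of_pos hx0, div_eq_inv_mul]
  have := hC0 x⁻¹ hεmem
  have h1 : |χ x⁻¹| ≤ max C0 1 := le_trans (le_abs_self _ |>.trans (le_abs_self _)) (by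
    exact le_trans (by simpa using this) (le_max_left _ _))
  exact mul_le_mul_of_nonneg_left h1 (by positivity)

lemma detR_one_sub_ne {A : Matrix (Fin s) (Fin s) ℝ}
    (hA_eig : ∀ z : ℂ, (A.map ((↑) : ℝ → ℂ)).charpoly.IsRoot z → 0 < z.re)
    {r : ℝ} (hr : r ≤ 0) :
    ((1 : Matrix (Fin s) (Fin s) ℝ) - r • A).det ≠ 0 := by
  intro h0
  apply detC_ne (z := ((r : ℝ) : ℂ)) hA_eig (by simpa using hr)
  have hmap : ((1 : Matrix (Fin s) (Fin s) ℂ) - ((r : ℝ) : ℂ) • A.map ((↑) : ℝ → ℂ))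
      = ((1 : Matrix (Fin s) (Fin s) ℝ) - r • A).map ((↑) : ℝ → ℂ) := by
    ext i' j'
    by_cases hij : i' = j' <;>
      simp [hij, Matrix.map_apply, Matrix.one_apply, Matrix.sub_apply, Matrix.smul_apply]
  rw [hmap]
  have h := RingHom.map_det Complex.ofRealHom ((1 : Matrix (Fin s) (Fin s) ℝ) - r • A)
  rw [h0, map_zero, RingHom.mapMatrix_apply] at h
  exact h.symm

lemma stabR_strict {A : Matrix (Fin s) (Fin s) ℝ} {b : Fin s → ℝ}
    (hA_inv : IsUnit A.det)
    (hA_eig : ∀ z : ℂ, (A.map ((↑) : ℝ → ℂ)).charpoly.IsRoot z → 0 < z.re)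
    (hAstab : ∀ z : ℂ, z.re ≤ 0 → ‖stabC A b z‖ ≤ 1)
    (hbAinv : b ⬝ᵥ (A⁻¹ *ᵥ (fun _ => (1 : ℝ))) = 1) :
    ∀ x : ℝ, 0 < x → |stabR A b (-x)| < 1 := by
  obtain ⟨C, hC, hrate⟩ := stabR_rate hA_inv hA_eig hbAinv
  intro x₀ hx₀
  by_contra hcon
  push_neg at hcon
  have habs : ∀ x : ℝ, 0 ≤ x → ‖stabC A b ((-x : ℝ) : ℂ)‖ = |stabR A b (-x)| := by
    intro x hx
    rw [stabC_real (isUnit_iff_ne_zero.mpr (detR_one_sub_ne hA_eig (neg_nonpos.mpr hx))),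
      Complex.norm_real, Real.norm_eq_abs]
  have hle : |stabR A b (-x₀)| ≤ 1 := by
    rw [← habs x₀ hx₀.le]
    exact hAstab _ (by simp [hx₀.le])
  have heq1 : |stabR A b (-x₀)| = 1 := le_antisymm hle hcon
  set U : Set ℂ := {z : ℂ | z.re < 0} with hU
  have hUopen : IsOpen U := isOpen_lt Complex.continuous_re continuous_const
  have hUconn : IsPreconnected U := (convex_halfSpace_re_lt 0).isPreconnected
  have hmem : ((-x₀ : ℝ) : ℂ) ∈ U := by simp [hU, hx₀]
  have hmax : IsMaxOn (norm ∘ stabC A b) U ((-x₀ : ℝ) : ℂ) := by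
    intro z hz
    have h1 : ‖stabC A b z‖ ≤ 1 := hAstab z (le_of_lt hz)
    simp only [Function.comp_apply]
    rw [habs x₀ hx₀.le, heq1]
    exact h1
  have hconst := Complex.eqOn_of_isPreconnected_of_isMaxOn_norm hUconn hUopen
    (differentiableOn_stabC hA_eig) hmem hmax
  set x₁ : ℝ := C + 1 with hx₁
  have hx₁1 : (1 : ℝ) ≤ x₁ := by linarith
  have hmem1 : ((-x₁ : ℝ) : ℂ) ∈ U := by simp [hU]; linarith
  have h2 := hconst hmem1
  have h3 : |stabR A b (-x₁)| = 1 := by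
    rw [← habs x₁ (by linarith)]
    rw [h2]
    simp only [Function.const_apply]
    rw [habs x₀ hx₀.le, heq1]
  have h4 := hrate x₁ hx₁1
  rw [h3] at h4
  have : x₁ ≤ C := by
    rw [le_div_iff₀ (by linarith : (0:ℝ) < x₁), one_mul] at h4
    exact h4
  linarith

theorem stability_function_decay {s : ℕ} (hs : 0 < s)
    (A : Matrix (Fin s) (Fin s) ℝ) (b : Fin s → ℝ)
    (hA_inv : IsUnit A.det)
    (hA_eig : ∀ z : ℂ, (A.map ((↑) : ℝ → ℂ)).charpoly.IsRoot z → 0 < z.re)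
    (hAstab : ∀ z : ℂ, z.re ≤ 0 → ‖stabC A b z‖ ≤ 1)
    (hb1 : ∑ i, b i = 1)
    (hbAinv : b ⬝ᵥ (A⁻¹ *ᵥ (fun _ => (1 : ℝ))) = 1) :
    ∃ bhat : ℝ, 0 < bhat ∧ ∀ x : ℝ, 0 < x →
      |stabR A b (-x)| ≤ 1 / (1 + bhat * x) := by
  -- the function g with stabR A b (-x) = 1 - x * g x
  set g : ℝ → ℝ := fun x =>
    b ⬝ᵥ (((1 : Matrix (Fin s) (Fin s) ℝ) + x • A)⁻¹ *ᵥ (fun _ => (1 : ℝ))) with hg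
  have hgc : ContinuousOn g (Set.Ici 0) := by
    simp only [hg, dotProduct, Matrix.mulVec, mul_one]
    exact continuousOn_finset_sum _ fun i _ => continuousOn_const.mul
      (continuousOn_finset_sum _ fun j _ => contOn_one_add_inv hA_eig i j)
  have hg0 : g 0 = 1 := by
    simp only [hg, zero_smul, add_zero]
    rw [show ((1 : Matrix (Fin s) (Fin s) ℝ))⁻¹ = 1 from Matrix.inv_eq_right_inv (by simp)]
    simpa [dotProduct, Matrix.mulVec, Matrix.one_apply] using hb1
  have hφ : ∀ x : ℝ, stabR A b (-x) = 1 - x * g x := by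
    intro x
    have hsub : (1 : Matrix (Fin s) (Fin s) ℝ) - (-x) • A
        = (1 : Matrix (Fin s) (Fin s) ℝ) + x • A := by
      ext i j; simp [Matrix.sub_apply, Matrix.add_apply, Matrix.smul_apply]
    rw [stabR, hsub, hg]
    ring
  have hφc : ContinuousOn (fun x => |stabR A b (-x)|) (Set.Ici 0) := by
    have : ContinuousOn (fun x => stabR A b (-x)) (Set.Ici 0) := by
      have h1 : ContinuousOn (fun x : ℝ => 1 - x * g x) (Set.Ici 0) :=
        continuousOn_const.sub (continuousOn_id.mul hgc)
      exact h1.congr fun x _ => hφ x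
    exact this.abs
  -- near 0 : pick ε₁
  have hcw : ContinuousWithinAt g (Set.Ici 0) 0 := hgc 0 (by simp)
  have hev : ∀ᶠ x in nhdsWithin 0 (Set.Ici 0), g x ∈ Set.Ioo (1/2 : ℝ) (3/2) := by
    apply hcw
    rw [hg0]
    exact Ioo_mem_nhds (by norm_num) (by norm_num)
  obtain ⟨δ, hδ, hδsub⟩ := Metric.mem_nhdsWithin_iff.mp hev
  set ε₁ : ℝ := min (δ/2) (1/2) with hε₁
  have hε₁pos : 0 < ε₁ := lt_min (by linarith) (by norm_num)
  have hε₁half : ε₁ ≤ 1/2 := min_le_right _ _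
  have hsmall : ∀ x : ℝ, 0 < x → x ≤ ε₁ → |stabR A b (-x)| ≤ 1 - x/2 := by
    intro x hx hxε
    have hmem : x ∈ Metric.ball (0:ℝ) δ ∩ Set.Ici 0 := by
      constructor
      · rw [Metric.mem_ball, Real.dist_eq, sub_zero, abs_of_pos hx]
        have : ε₁ ≤ δ/2 := min_le_left _ _
        linarith
      · exact le_of_lt hx
    have hgx := hδsub hmem
    simp only [Set.mem_Ioo] at hgx
    rw [hφ x, abs_of_pos (by nlinarith [hgx.2, hε₁half] : (0:ℝ) < 1 - x * g x)]
    nlinarith [hgx.1]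
  -- rate at ∞
  obtain ⟨C₀, hC₀, hrate₀⟩ := stabR_rate hA_inv hA_eig hbAinv
  set C : ℝ := max C₀ 1 with hC
  have hC1 : (1:ℝ) ≤ C := le_max_right _ _
  have hCpos : (0:ℝ) < C := by linarith
  have hrate : ∀ x : ℝ, 1 ≤ x → |stabR A b (-x)| ≤ C / x := fun x hx =>
    le_trans (hrate₀ x hx) (div_le_div_of_nonneg_right (le_max_left _ _) (by linarith))
  -- middle region
  have hne : (Set.Icc ε₁ (2*C)).Nonempty := Set.nonempty_Icc.mpr (by linarith)
  obtain ⟨x₂, hx₂mem, hx₂max⟩ := (isCompact_Icc).exists_isMaxOn hne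
    (hφc.mono (fun y hy => le_trans hε₁pos.le hy.1))
  set K : ℝ := |stabR A b (-x₂)| with hK
  have hKlt : K < 1 := stabR_strict hA_inv hA_eig hAstab hbAinv x₂ (lt_of_lt_of_le hε₁pos hx₂mem.1)
  have hK0 : 0 ≤ K := abs_nonneg _
  -- the constant
  refine ⟨min (min (1/2) (1/(2*C))) ((1-K)/(2*C)), ?_, ?_⟩
  · apply lt_min (lt_min (by norm_num) (by positivity))
    have : 0 < 1 - K := by linarith
    positivity
  intro x hx
  set bh : ℝ := min (min (1/2) (1/(2*C))) ((1-K)/(2*C)) with hbh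
  have hbhpos : 0 < bh := by
    apply lt_min (lt_min (by norm_num) (by positivity))
    have : 0 < 1 - K := by linarith
    positivity
  have hbhhalf : bh ≤ 1/2 := le_trans (min_le_left _ _) (min_le_left _ _)
  have hbhC : bh * (2*C) ≤ 1 := by
    have h1 : bh ≤ 1/(2*C) := le_trans (min_le_left _ _) (min_le_right _ _)
    rw [← le_div_iff₀ (by linarith : (0:ℝ) < 2*C)]
    exact h1
  have hbhK : bh * (2*C) ≤ 1 - K := by
    have h1 : bh ≤ (1-K)/(2*C) := min_le_right _ _
    rw [← le_div_iff₀ (by linarith : (0:ℝ) < 2*C)]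
    exact h1
  have hden : (0:ℝ) < 1 + bh * x := by nlinarith
  rw [le_div_iff₀ hden]
  rcases le_or_gt x ε₁ with hcase1 | hcase1
  · have h1 := hsmall x hx hcase1
    have hx12 : x ≤ 1/2 := le_trans hcase1 hε₁half
    have e1 : |stabR A b (-x)| * (1 + bh * x) ≤ (1 - x/2) * (1 + bh * x) :=
      mul_le_mul_of_nonneg_right h1 hden.le
    have e2 : bh * x ≤ (1/2) * x := mul_le_mul_of_nonneg_right hbhhalf hx.le
    nlinarith [mul_pos (mul_pos hbhpos hx) hx]
  rcases le_or_gt x (2*C) with hcase2 | hcase2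
  · have h1 : |stabR A b (-x)| ≤ K := hx₂max ⟨le_of_lt hcase1, hcase2⟩
    have e1 : |stabR A b (-x)| * (1 + bh * x) ≤ K * (1 + bh * x) :=
      mul_le_mul_of_nonneg_right h1 hden.le
    have e2 : bh * x ≤ bh * (2*C) := mul_le_mul_of_nonneg_left hcase2 hbhpos.le
    have e3 : K * (bh * (2*C)) ≤ K * (1 - K) := mul_le_mul_of_nonneg_left hbhK hK0
    nlinarith [sq_nonneg (1 - K), mul_le_mul_of_nonneg_left e2 hK0]
  · have hx1 : (1:ℝ) ≤ x := by linarith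
    have h1 := hrate x hx1
    have e1 : |stabR A b (-x)| * (1 + bh * x) ≤ (C / x) * (1 + bh * x) :=
      mul_le_mul_of_nonneg_right h1 hden.le
    have e3 : (C / x) * (1 + bh * x) = C / x + C * bh := by
      field_simp
    have e4 : C / x ≤ 1/2 := by
      rw [div_le_iff₀ (by linarith : (0:ℝ) < x)]
      linarith
    have e5 : C * bh ≤ 1/2 := by nlinarith
    linarith

end
end

section
/- Let s ≥ 1 with Runge–Kutta coefficients A ∈ ℝ^{s×s}, nodes 0 ≤ c_1 ≤ … ≤ c_s = 1, and let β > −1, τ_1 > 0. For x > 0 define the first-step stage defects d_{1i}(x) := y(x, c_i τ_1) − τ_1·Σ_j A_{ij}(−x·y(x, c_j τ_1) + (c_j τ_1)^β) for 1 ≤ i ≤ s. Then there exists a constant C > 0, depending only on A, c and β but not on τ_1 or x, such that: if c_1 > 0 then max_{1≤i≤s} |d_{1i}(x)| ≤ C·Γ(β+1)·τ_1^{β+1}/(1 + x·c_1·τ_1) for all x > 0; and if c_1 = 0, c_2 > 0 and β > 0, then max_{1≤i≤s} |d_{1i}(x)| ≤ C·Γ(β+1)·τ_1^{β+1}/(1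 + x·c_2·τ_1) for all x > 0. -/
open MeasureTheory Matrix

noncomputable section

namespace FSAux

lemma gamma_prod {β : ℝ} (hβ : -1 < β) (k : ℕ) :
    Real.Gamma ((k : ℝ) + β + 2) =
      Real.Gamma (β + 1) * ∏ j ∈ Finset.range (k + 1), (β + 1 + j) := by
  induction k with
  | zero =>
      rw [Finset.prod_range_one, Nat.cast_zero, zero_add,
        show β + 2 = (β + 1) + 1 by ring, Real.Gamma_add_one (by linarith)]
      push_cast; ring
  | succ n ih =>
      have hn : (0:ℝ) ≤ n := Nat.cast_nonneg n
      have h1 : ((n : ℝ) + 1) + β + 2 = ((n : ℝ) + β + 2) + 1 := by ring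
      rw [Nat.cast_succ, h1, Real.Gamma_add_one (by linarith), ih,
        Finset.prod_range_succ _ (n+1)]
      push_cast
      ring

lemma gamma_pos {β : ℝ} (hβ : -1 < β) (k : ℕ) : 0 < Real.Gamma ((k : ℝ) + β + 2) := by
  have hn : (0:ℝ) ≤ k := Nat.cast_nonneg k
  exact Real.Gamma_pos_of_pos (by linarith)

lemma fact_le_gamma {β : ℝ} (hβ : -1 < β) (k : ℕ) :
    (Real.Gamma (β + 2)) * k.factorial ≤ Real.Gamma ((k : ℝ) + β + 2) := by
  induction k with
  | zero => simp
  | succ n ih =>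
      have hn : (0:ℝ) ≤ n := Nat.cast_nonneg n
      have h1 : ((n : ℝ) + 1) + β + 2 = ((n : ℝ) + β + 2) + 1 := by ring
      rw [Nat.cast_succ, h1, Real.Gamma_add_one (by linarith)]
      have hg : (0:ℝ) < Real.Gamma (β + 2) := Real.Gamma_pos_of_pos (by linarith)
      have hgp := gamma_pos hβ n
      have hn1 : ((n:ℝ) + 1) ≤ (n : ℝ) + β + 2 := by linarith
      calc Real.Gamma (β + 2) * (n + 1).factorial
          = ((n:ℝ) + 1) * (Real.Gamma (β + 2) * n.factorial) := by
            push_cast [Nat.factorial_succ]; ring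
        _ ≤ ((n:ℝ) + β + 2) * Real.Gamma ((n:ℝ) + β + 2) := by
            apply mul_le_mul hn1 ih (by positivity) (by linarith)

open Finset

lemma sum_binom : ∀ (k : ℕ) (a : ℝ), 0 < a →
    ∑ i ∈ range (k+1), (-1:ℝ)^i * (k.choose i) / (a + i) =
      k.factorial / ∏ j ∈ range (k+1), (a + j) := by
  intro k
  induction k with
  | zero => intro a ha; simp
  | succ n ih =>
    intro a ha
    have ha1 : (0:ℝ) < a + 1 := by linarith
    have hS := ih a ha
    have hS1 := ih (a+1) ha1
    have key : ∑ i ∈ range (n+2), (-1:ℝ)^i * ((n+1).choose i) / (a + i) =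
        (∑ i ∈ range (n+1), (-1:ℝ)^i * (n.choose i) / (a + i)) -
        ∑ i ∈ range (n+1), (-1:ℝ)^i * (n.choose i) / ((a+1) + i) := by
      rw [Finset.sum_range_succ' (fun i => (-1:ℝ)^i * (((n+1).choose i : ℕ) : ℝ) / (a + i)) (n+1)]
      simp only [Nat.cast_add, Nat.cast_one, Nat.cast_zero, add_zero, pow_zero,
        Nat.choose_zero_right, one_mul, Nat.cast_ofNat]
      have hsplit : ∀ i ∈ range (n + 1),
          (-1:ℝ)^(i+1) * (((n+1).choose (i+1) : ℕ) : ℝ) / (a + ((i:ℝ)+1)) =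
          -((-1:ℝ)^i * ((n.choose i : ℕ) : ℝ) / ((a+1) + i))
            - (-1:ℝ)^i * ((n.choose (i+1) : ℕ) : ℝ) / (a + ((i:ℝ)+1)) := by
        intro i _
        rw [Nat.choose_succ_succ]
        have h1 : (a : ℝ) + ((i:ℝ)+1) ≠ 0 := by positivity
        have h2 : (a : ℝ) + 1 + (i:ℝ) ≠ 0 := by positivity
        have h3 : (a : ℝ) + 1 + (i:ℝ) = a + ((i:ℝ)+1) := by ring
        push_cast
        rw [h3]
        field_simp
        ring
      rw [Finset.sum_congr rfl hsplit]
      have hT2 : ∑ i ∈ range (n+1), (-1:ℝ)^i * ((n.choose (i+1) : ℕ) : ℝ) / (a + ((i:ℝ)+1)) =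
          -(∑ i ∈ range (n+1), (-1:ℝ)^i * ((n.choose i : ℕ) : ℝ) / (a + i)) + 1/a := by
        rw [Finset.sum_range_succ' (fun i => (-1:ℝ)^i * ((n.choose i : ℕ) : ℝ) / (a + i)) n]
        rw [Finset.sum_range_succ (fun i => (-1:ℝ)^i * ((n.choose (i+1) : ℕ) : ℝ) / (a + ((i:ℝ)+1))) n]
        simp only [Nat.choose_succ_self, Nat.cast_zero, Nat.cast_add, Nat.cast_one,
          mul_zero, zero_div, add_zero, pow_zero, Nat.choose_zero_right, one_mul, mul_one]
        have h0 : ∀ i ∈ range n, ((-1:ℝ))^(i+1) * ((n.choose (i+1) : ℕ) : ℝ) / (a + ((i:ℝ)+1)) =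
            -((-1:ℝ)^i * ((n.choose (i+1) : ℕ) : ℝ) / (a + ((i:ℝ)+1))) := by
          intro i _; ring
        rw [Finset.sum_congr rfl h0, Finset.sum_neg_distrib]
        ring
      rw [Finset.sum_sub_distrib, Finset.sum_neg_distrib, hT2]
      ring
    rw [key, hS, hS1]
    have hprodpos : ∀ (b : ℝ), 0 < b → ∀ m : ℕ, (0:ℝ) < ∏ j ∈ range m, (b + j) := by
      intro b hb m
      apply Finset.prod_pos
      intro j _
      have : (0:ℝ) ≤ j := Nat.cast_nonneg j
      linarith
    have hP := hprodpos (a+1) ha1 (n+2)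
    have hQ := hprodpos a ha (n+2)
    have hQ' := hprodpos a ha (n+3)
    have hprod : a * ∏ j ∈ range (n+2), ((a+1) + j) =
        (∏ j ∈ range (n+2), (a + j)) * (a + ((n:ℝ)+2)) := by
      have h1 : ∏ j ∈ range (n+3), (a + (j:ℝ)) =
          (∏ j ∈ range (n+2), (a + ((j:ℝ)+1))) * (a + (0:ℕ)) := by
        rw [Finset.prod_range_succ' (fun j => (a + (j:ℝ))) (n+2)]
        push_cast
        apply congrArg
        ring
      have h2 : ∏ j ∈ range (n+3), (a + (j:ℝ)) =
          (∏ j ∈ range (n+2), (a + j)) * (a + ((n:ℝ)+2)) := by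
        rw [Finset.prod_range_succ]
        push_cast; ring
      have h3 : ∏ j ∈ range (n+2), (a + ((j:ℝ)+1)) = ∏ j ∈ range (n+2), ((a+1) + (j:ℝ)) :=
        Finset.prod_congr rfl (fun j _ => by ring)
      rw [← h2, h1, h3]
      push_cast
      ring
    have hfact : ((n+1).factorial : ℝ) = ((n:ℝ)+1) * n.factorial := by
      push_cast [Nat.factorial_succ]; ring
    have hlast : ∏ j ∈ range (n+2), (a + j) =
        (∏ j ∈ range (n+1), (a + j)) * (a + ((n:ℝ)+1)) := by
      rw [Finset.prod_range_succ]; push_cast; ring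
    have hQ1 := hprodpos a ha (n+1)
    have hP1 := hprodpos (a+1) ha1 (n+1)
    have hlastP : ∏ j ∈ range (n+2), ((a+1) + j) =
        (∏ j ∈ range (n+1), ((a+1) + j)) * ((a+1) + ((n:ℝ)+1)) := by
      rw [Finset.prod_range_succ]; push_cast; ring
    rw [hlast] at hprod
    rw [hlastP] at hprod
    have hX : (a + ((n:ℝ)+2)) ≠ 0 := by positivity
    have hcancel : a * ∏ j ∈ range (n+1), ((a+1) + j) =
        (∏ j ∈ range (n+1), (a + j)) * (a + ((n:ℝ)+1)) := by
      apply mul_right_cancel₀ hX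
      have h5 : a + 1 + ((n:ℝ)+1) = a + ((n:ℝ)+2) := by ring
      rw [h5] at hprod
      linear_combination hprod
    have hPeq : ∏ j ∈ range (n+1), ((a+1) + j) =
        (∏ j ∈ range (n+1), (a + j)) * (a + ((n:ℝ)+1)) / a := by
      field_simp
      linear_combination hcancel
    rw [hfact, hlast, hPeq]
    have han1 : (0:ℝ) < a + ((n:ℝ)+1) := by
      have : (0:ℝ) ≤ n := Nat.cast_nonneg n
      linarith
    field_simp
    ring


lemma integrable_rpow_Ioc {β t : ℝ} (hβ : -1 < β) (ht : 0 < t) :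
    IntervalIntegrable (fun σ : ℝ => σ ^ β) MeasureTheory.volume 0 t :=
  intervalIntegral.intervalIntegrable_rpow' hβ

lemma integral_pow_mul_rpow {β : ℝ} (hβ : -1 < β) {t : ℝ} (ht : 0 < t) (k : ℕ) :
    ∫ σ in (0:ℝ)..t, (t-σ)^k * σ^β =
      ((k.factorial : ℝ) * Real.Gamma (β+1) / Real.Gamma ((k:ℝ)+β+2)) * t^((k:ℝ)+β+1) := by
  have hcong : ∀ᵐ σ ∂MeasureTheory.volume, σ ∈ Set.uIoc (0:ℝ) t →
      (t-σ)^k * σ^β =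
        ∑ i ∈ range (k+1), ((-1:ℝ)^i * (k.choose i) * t^(k-i)) * σ^((i:ℝ)+β) := by
    filter_upwards with σ hσ
    rw [Set.uIoc_of_le ht.le] at hσ
    have hσ0 : 0 < σ := hσ.1
    have hsub : (t - σ)^k = ∑ i ∈ range (k+1), σ^i * (-1:ℝ)^i * t^(k-i) * (k.choose i) := by
      have := add_pow (-σ) t k
      rw [show -σ + t = t - σ by ring] at this
      rw [this]
      apply Finset.sum_congr rfl
      intro i _
      rw [neg_pow]
      ring
    rw [hsub, Finset.sum_mul]
    apply Finset.sum_congr rfl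
    intro i _
    have : σ ^ ((i:ℝ)+β) = σ ^ (i:ℕ) * σ ^ β := by
      rw [Real.rpow_add hσ0, Real.rpow_natCast]
    rw [this]
    ring
  rw [intervalIntegral.integral_congr_ae hcong]
  have hint : ∀ i ∈ range (k+1), IntervalIntegrable
      (fun σ : ℝ => ((-1:ℝ)^i * (k.choose i) * t^(k-i)) * σ^((i:ℝ)+β))
      MeasureTheory.volume 0 t := by
    intro i _
    have hi : (-1:ℝ) < (i:ℝ) + β := by
      have : (0:ℝ) ≤ i := Nat.cast_nonneg i
      linarith
    exact (intervalIntegral.intervalIntegrable_rpow' hi).const_mul _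
  rw [intervalIntegral.integral_finset_sum hint]
  have hval : ∀ i ∈ range (k+1),
      ∫ σ in (0:ℝ)..t, ((-1:ℝ)^i * (k.choose i) * t^(k-i)) * σ^((i:ℝ)+β) =
        ((-1:ℝ)^i * (k.choose i) / ((β+1) + i)) * t^((k:ℝ)+β+1) := by
    intro i hi
    have hi' : (-1:ℝ) < (i:ℝ) + β := by
      have : (0:ℝ) ≤ i := Nat.cast_nonneg i
      linarith
    rw [intervalIntegral.integral_const_mul, integral_rpow (Or.inl hi')]
    have h0 : (0:ℝ) ^ ((i:ℝ)+β+1) = 0 := Real.zero_rpow (by linarith [Nat.cast_nonneg (α := ℝ) i])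
    rw [h0, sub_zero]
    have hmem : i ≤ k := Nat.lt_succ_iff.mp (Finset.mem_range.mp hi)
    have hpow : t^(k-i) * t^((i:ℝ)+β+1) = t^((k:ℝ)+β+1) := by
      rw [← Real.rpow_natCast t (k-i), ← Real.rpow_add ht]
      congr 1
      push_cast [Nat.cast_sub hmem]
      ring
    rw [← hpow]
    have hd : (β+1) + (i:ℝ) = (i:ℝ) + β + 1 := by ring
    rw [hd]
    ring
  rw [Finset.sum_congr rfl hval, ← Finset.sum_mul]
  have hsum : ∑ i ∈ range (k+1), (-1:ℝ)^i * (k.choose i) / ((β+1) + i) =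
      k.factorial / ∏ j ∈ range (k+1), ((β+1) + j) := sum_binom k (β+1) (by linarith)
  rw [hsum, gamma_prod hβ k]
  have hg1 : (0:ℝ) < Real.Gamma (β+1) := Real.Gamma_pos_of_pos (by linarith)
  have hprodpos : (0:ℝ) < ∏ j ∈ range (k+1), ((β+1) + j) := by
    apply Finset.prod_pos
    intro j _
    have : (0:ℝ) ≤ j := Nat.cast_nonneg j
    linarith
  have hpp : ∏ j ∈ range (k+1), (β + 1 + (j:ℝ)) = ∏ j ∈ range (k+1), ((β+1) + (j:ℝ)) := rfl
  rw [hpp]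
  field_simp

lemma ySol_eq_integral {β x t : ℝ} (hβ : -1 < β) (ht : 0 < t) :
    ySol β x t = ∫ σ in (0:ℝ)..t, Real.exp (-(x*(t-σ))) * σ^β := by
  classical
  set F : ℕ → ℝ → ℝ := fun k σ => ((-x)^k / k.factorial) * ((t-σ)^k * σ^β) with hF
  have hFint : ∀ k : ℕ, IntervalIntegrable (fun σ => (t-σ)^k * σ^β)
      MeasureTheory.volume 0 t := by
    intro k
    have h1 : IntervalIntegrable (fun σ : ℝ => σ^β) MeasureTheory.volume 0 t :=
      intervalIntegral.intervalIntegrable_rpow' hβ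
    have h2 : ContinuousOn (fun σ : ℝ => (t-σ)^k) (Set.uIcc 0 t) :=
      (Continuous.pow (continuous_const.sub continuous_id) k).continuousOn
    simpa [mul_comm] using h1.mul_continuousOn h2
  have hFint' : ∀ k : ℕ, MeasureTheory.Integrable (F k)
      (MeasureTheory.volume.restrict (Set.Ioc (0:ℝ) t)) := by
    intro k
    have := ((hFint k).const_mul ((-x)^k / k.factorial)).1
    have h' : MeasureTheory.IntegrableOn (F k) (Set.Ioc (0:ℝ) t) := by simpa [hF] using this
    exact h'
  have hrpow_int : MeasureTheory.IntegrableOn (fun σ : ℝ => σ^β) (Set.Ioc (0:ℝ) t) :=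
    (intervalIntegral.intervalIntegrable_rpow' (a := 0) (b := t) hβ).1
  have hnorm_le : ∀ k : ℕ, (∫ σ in Set.Ioc (0:ℝ) t, ‖F k σ‖) ≤
      (abs x * t)^k / k.factorial * ∫ σ in Set.Ioc (0:ℝ) t, σ^β := by
    intro k
    rw [← MeasureTheory.integral_const_mul]
    apply MeasureTheory.setIntegral_mono_on
    · exact (hFint' k).norm
    · exact (hrpow_int.const_mul _)
    · exact measurableSet_Ioc
    · intro σ hσ
      have hσ0 : 0 < σ := hσ.1
      have hσt : σ ≤ t := hσ.2
      have hrp : (0:ℝ) ≤ σ^β := Real.rpow_nonneg hσ0.le β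
      have h1 : ‖F k σ‖ = (|x|^k / k.factorial) * ((t-σ)^k * σ^β) := by
        rw [hF]
        simp only [norm_mul, norm_div, norm_pow, norm_neg, Real.norm_eq_abs]
        rw [abs_of_nonneg (by positivity : (0:ℝ) ≤ (k.factorial:ℝ)),
          abs_of_nonneg (by linarith : (0:ℝ) ≤ t-σ), abs_of_nonneg hrp]
      rw [h1, mul_pow (abs x) t k]
      have h2 : (t-σ)^k ≤ t^k := by
        apply pow_le_pow_left₀ (by linarith) (by linarith)
      have hfk : (0:ℝ) < k.factorial := by positivity
      have hx : (0:ℝ) ≤ |x|^k := by positivity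
      calc |x|^k / k.factorial * ((t-σ)^k * σ^β)
          ≤ |x|^k / k.factorial * (t^k * σ^β) := by
            apply mul_le_mul_of_nonneg_left _ (by positivity)
            exact mul_le_mul_of_nonneg_right h2 hrp
        _ = |x|^k * t^k / k.factorial * σ^β := by ring
  have hsummable : Summable (fun k : ℕ => ∫ σ in Set.Ioc (0:ℝ) t, ‖F k σ‖) := by
    apply Summable.of_nonneg_of_le
      (fun k => MeasureTheory.integral_nonneg (fun σ => norm_nonneg _)) hnorm_le
    apply Summable.mul_right
    exact Real.summable_pow_div_factorial (abs x * t)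
  have hswap := MeasureTheory.integral_tsum_of_summable_integral_norm hFint' hsummable
  have hptwise : ∀ᵐ σ ∂(MeasureTheory.volume.restrict (Set.Ioc (0:ℝ) t)),
      (∑' k, F k σ) = Real.exp (-(x*(t-σ))) * σ^β := by
    filter_upwards with σ
    have hexp : Real.exp (-(x*(t-σ))) = ∑' k : ℕ, (-(x*(t-σ)))^k / k.factorial := by
      rw [Real.exp_eq_exp_ℝ, NormedSpace.exp_eq_tsum_div]
    rw [hexp, ← tsum_mul_right]
    apply tsum_congr
    intro k
    rw [hF]
    simp only
    rw [show (-(x*(t-σ))) = (-x) * (t-σ) by ring, mul_pow]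
    ring
  rw [intervalIntegral.integral_of_le ht.le,
    ← MeasureTheory.integral_congr_ae hptwise, ← hswap]
  rw [ySol, ← tsum_mul_left]
  apply tsum_congr
  intro k
  have : ∫ σ in Set.Ioc (0:ℝ) t, F k σ = ∫ σ in (0:ℝ)..t, F k σ :=
    (intervalIntegral.integral_of_le ht.le).symm
  rw [this, hF]
  simp only
  rw [intervalIntegral.integral_const_mul, integral_pow_mul_rpow hβ ht k]
  have hg := gamma_pos hβ k
  have hfk : (0:ℝ) < k.factorial := by positivity
  field_simp

lemma hasDerivAt_exp_aux (x t σ : ℝ) :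
    HasDerivAt (fun σ : ℝ => Real.exp (-(x*(t-σ)))) (x * Real.exp (-(x*(t-σ)))) σ := by
  have h1 : HasDerivAt (fun σ : ℝ => -(x*(t-σ))) x σ := by
    have : HasDerivAt (fun σ : ℝ => x*σ - x*t) x σ := by
      simpa using ((hasDerivAt_id σ).const_mul x).sub_const (x*t)
    convert this using 2 with σ
    ring
  rw [mul_comm]
  exact (Real.hasDerivAt_exp (-(x*(t-σ)))).comp σ h1

lemma integrable_exp_aux (x t a b : ℝ) :
    IntervalIntegrable (fun σ : ℝ => Real.exp (-(x*(t-σ)))) MeasureTheory.volume a b :=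
  (Real.continuous_exp.comp ((continuous_const.mul (continuous_const.sub continuous_id)).neg)).intervalIntegrable a b

lemma integral_exp_aux {x : ℝ} (hx : 0 < x) (t a b : ℝ) :
    ∫ σ in a..b, Real.exp (-(x*(t-σ))) =
      (Real.exp (-(x*(t-b))) - Real.exp (-(x*(t-a)))) / x := by
  have hd : ∀ σ ∈ Set.uIcc a b,
      HasDerivAt (fun σ : ℝ => Real.exp (-(x*(t-σ))) / x)
        (Real.exp (-(x*(t-σ)))) σ := by
    intro σ _
    have := (hasDerivAt_exp_aux x t σ).div_const x
    simpa [mul_div_assoc, mul_div_cancel_left₀ _ (ne_of_gt hx)] using this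
  have := intervalIntegral.integral_eq_sub_of_hasDerivAt hd
    (integrable_exp_aux x t a b)
  rw [this]
  ring

lemma integral_exp_mul_aux {x : ℝ} (hx : 0 < x) (t a b : ℝ) :
    ∫ σ in a..b, Real.exp (-(x*(t-σ))) * (t-σ) =
      ((t-b)/x + 1/x^2) * Real.exp (-(x*(t-b))) -
        ((t-a)/x + 1/x^2) * Real.exp (-(x*(t-a))) := by
  have hd : ∀ σ ∈ Set.uIcc a b,
      HasDerivAt (fun σ : ℝ => ((t-σ)/x + 1/x^2) * Real.exp (-(x*(t-σ))))
        (Real.exp (-(x*(t-σ))) * (t-σ)) σ := by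
    intro σ _
    have h1 : HasDerivAt (fun σ : ℝ => (t-σ)/x + 1/x^2) (-(1/x)) σ := by
      have h := (((hasDerivAt_id σ).neg.add_const t).div_const x).add_const (1/x^2)
      have heq : (fun u : ℝ => (-u + t)/x + 1/x^2) = (fun u : ℝ => (t-u)/x + 1/x^2) := by
        funext u; ring
      simp only [Pi.neg_apply, id] at h
      rw [heq] at h
      exact h.congr_deriv (by ring)
    have h2 := h1.mul (hasDerivAt_exp_aux x t σ)
    have hx0 : x ≠ 0 := hx.ne'
    exact h2.congr_deriv (by field_simp; ring)
  have hint : IntervalIntegrable (fun σ : ℝ => Real.exp (-(x*(t-σ))) * (t-σ))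
      MeasureTheory.volume a b := by
    apply Continuous.intervalIntegrable
    exact (Real.continuous_exp.comp ((continuous_const.mul (continuous_const.sub continuous_id)).neg)).mul (continuous_const.sub continuous_id)
  rw [intervalIntegral.integral_eq_sub_of_hasDerivAt hd hint]

lemma intInt_exp_rpow {β x t : ℝ} (hβ : -1 < β) :
    IntervalIntegrable (fun σ : ℝ => Real.exp (-(x*(t-σ))) * σ^β)
      MeasureTheory.volume 0 t := by
  have h1 : IntervalIntegrable (fun σ : ℝ => σ^β) MeasureTheory.volume 0 t :=
    intervalIntegral.intervalIntegrable_rpow' hβ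
  have h2 : ContinuousOn (fun σ : ℝ => Real.exp (-(x*(t-σ)))) (Set.uIcc 0 t) :=
    (Real.continuous_exp.comp ((continuous_const.mul (continuous_const.sub continuous_id)).neg)).continuousOn
  simpa [mul_comm] using h1.mul_continuousOn h2

lemma rpow_endpoint_bound {β t : ℝ} (ht : 0 < t) {σ : ℝ} (hσ1 : t/2 ≤ σ) (hσ2 : σ ≤ t) :
    σ^β ≤ (t/2)^β + t^β := by
  have ht2 : (0:ℝ) < t/2 := by linarith
  have hσ0 : (0:ℝ) < σ := lt_of_lt_of_le ht2 hσ1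
  rcases le_or_gt 0 β with hb | hb
  · have : σ^β ≤ t^β := Real.rpow_le_rpow hσ0.le hσ2 hb
    have h2 : (0:ℝ) ≤ (t/2)^β := Real.rpow_nonneg ht2.le β
    linarith
  · have : σ^β ≤ (t/2)^β := Real.rpow_le_rpow_of_nonpos ht2 hσ1 hb.le
    have h2 : (0:ℝ) ≤ t^β := Real.rpow_nonneg ht.le β
    linarith

lemma ue_le_two {u : ℝ} (hu : 0 ≤ u) : u * Real.exp (-(u/2)) ≤ 2 := by
  have h1 : u/2 + 1 ≤ Real.exp (u/2) := Real.add_one_le_exp (u/2)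
  have h2 : (0:ℝ) < Real.exp (u/2) := Real.exp_pos _
  rw [Real.exp_neg, ← div_eq_mul_inv, div_le_iff₀ h2]
  nlinarith

lemma Y_bound {β : ℝ} (hβ : -1 < β) : ∃ K : ℝ, 0 < K ∧ ∀ x t : ℝ, 0 < x → 0 < t →
    0 ≤ ySol β x t ∧ (1 + x*t) * ySol β x t ≤ K * t^(β+1) := by
  have hb1 : (0:ℝ) < β + 1 := by linarith
  refine ⟨1/(β+1) + (2:ℝ)^(-β)/(β+1) + (2:ℝ)^(-β) + 1, by positivity, ?_⟩
  intro x t hx ht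
  rw [ySol_eq_integral hβ ht]
  set f : ℝ → ℝ := fun σ => Real.exp (-(x*(t-σ))) * σ^β with hf
  have hfint : IntervalIntegrable f MeasureTheory.volume 0 t := intInt_exp_rpow hβ
  have ht2 : (0:ℝ) < t/2 := by linarith
  have ht2' : t/2 ≤ t := by linarith
  have hIcc1 : Set.uIcc (0:ℝ) (t/2) ⊆ Set.uIcc 0 t := by
    rw [Set.uIcc_of_le ht2.le, Set.uIcc_of_le ht.le]
    exact Set.Icc_subset_Icc le_rfl ht2'
  have hIcc2 : Set.uIcc (t/2) t ⊆ Set.uIcc (0:ℝ) t := by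
    rw [Set.uIcc_of_le ht2', Set.uIcc_of_le ht.le]
    exact Set.Icc_subset_Icc ht2.le le_rfl
  have hf1 : IntervalIntegrable f MeasureTheory.volume 0 (t/2) := hfint.mono_set hIcc1
  have hf2 : IntervalIntegrable f MeasureTheory.volume (t/2) t := hfint.mono_set hIcc2
  have hrint : IntervalIntegrable (fun σ:ℝ => σ^β) MeasureTheory.volume 0 t :=
    intervalIntegral.intervalIntegrable_rpow' hβ
  have hrint1 : IntervalIntegrable (fun σ:ℝ => σ^β) MeasureTheory.volume 0 (t/2) :=
    hrint.mono_set hIcc1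
  have hfnn : ∀ σ ∈ Set.Icc (0:ℝ) t, 0 ≤ f σ := by
    intro σ hσ
    exact mul_nonneg (Real.exp_nonneg _) (Real.rpow_nonneg hσ.1 β)
  have hY0 : 0 ≤ ∫ σ in (0:ℝ)..t, f σ := intervalIntegral.integral_nonneg ht.le hfnn
  have hrpow_eval : ∀ s : ℝ, 0 < s → ∫ σ in (0:ℝ)..s, σ^β = s^(β+1)/(β+1) := by
    intro s hs
    rw [integral_rpow (Or.inl hβ), Real.zero_rpow (ne_of_gt hb1), sub_zero]
  have hle1 : ∫ σ in (0:ℝ)..t, f σ ≤ t^(β+1)/(β+1) := by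
    rw [← hrpow_eval t ht]
    apply intervalIntegral.integral_mono_on ht.le hfint hrint
    intro σ hσ
    rw [hf]
    have h1 : Real.exp (-(x*(t-σ))) ≤ 1 := by
      rw [Real.exp_le_one_iff]
      have : 0 ≤ x * (t - σ) := mul_nonneg hx.le (by linarith [hσ.2])
      linarith
    calc Real.exp (-(x*(t-σ))) * σ^β ≤ 1 * σ^β :=
          mul_le_mul_of_nonneg_right h1 (Real.rpow_nonneg hσ.1 β)
      _ = σ^β := one_mul _
  -- bound on x * ∫₀^{t/2}
  have hP1 : ∫ σ in (0:ℝ)..(t/2), f σ ≤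
      Real.exp (-(x*(t/2))) * ((t/2)^(β+1)/(β+1)) := by
    have step : ∫ σ in (0:ℝ)..(t/2), f σ ≤
        ∫ σ in (0:ℝ)..(t/2), Real.exp (-(x*(t/2))) * σ^β := by
      apply intervalIntegral.integral_mono_on ht2.le hf1 (hrint1.const_mul _)
      intro σ hσ
      rw [hf]
      have h1 : Real.exp (-(x*(t-σ))) ≤ Real.exp (-(x*(t/2))) := by
        apply Real.exp_le_exp.mpr
        have : x * (t/2) ≤ x * (t - σ) :=
          mul_le_mul_of_nonneg_left (by linarith [hσ.2]) hx.le
        linarith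
      exact mul_le_mul_of_nonneg_right h1 (Real.rpow_nonneg hσ.1 β)
    rw [intervalIntegral.integral_const_mul, hrpow_eval (t/2) ht2] at step
    exact step
  -- bound on ∫_{t/2}^t
  have hP2 : ∫ σ in (t/2)..t, f σ ≤ ((t/2)^β + t^β) * (1/x) := by
    have hexpint : IntervalIntegrable
        (fun σ : ℝ => Real.exp (-(x*(t-σ))) * ((t/2)^β + t^β))
        MeasureTheory.volume (t/2) t :=
      ((integrable_exp_aux x t _ _).mul_const _)
    have step : ∫ σ in (t/2)..t, f σ ≤
        ∫ σ in (t/2)..t, Real.exp (-(x*(t-σ))) * ((t/2)^β + t^β) := by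
      apply intervalIntegral.integral_mono_on ht2' hf2 hexpint
      intro σ hσ
      rw [hf]
      exact mul_le_mul_of_nonneg_left (rpow_endpoint_bound ht hσ.1 hσ.2)
        (Real.exp_nonneg _)
    have heval : ∫ σ in (t/2)..t, Real.exp (-(x*(t-σ))) * ((t/2)^β + t^β) =
        ((1 - Real.exp (-(x*(t/2))))/x) * ((t/2)^β + t^β) := by
      rw [intervalIntegral.integral_mul_const, integral_exp_aux hx]
      rw [show t - t = 0 by ring, show -(x*(0:ℝ)) = 0 by ring, Real.exp_zero]
      ring_nf
    rw [heval] at step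
    have hconst : (0:ℝ) ≤ (t/2)^β + t^β :=
      add_nonneg (Real.rpow_nonneg ht2.le β) (Real.rpow_nonneg ht.le β)
    have hfin : ((1 - Real.exp (-(x*(t/2))))/x) * ((t/2)^β + t^β) ≤
        (1/x) * ((t/2)^β + t^β) := by
      apply mul_le_mul_of_nonneg_right _ hconst
      gcongr
      linarith [Real.exp_nonneg (-(x*(t/2)))]
    calc ∫ σ in (t/2)..t, f σ ≤ ((1 - Real.exp (-(x*(t/2))))/x) * ((t/2)^β + t^β) := step
      _ ≤ (1/x) * ((t/2)^β + t^β) := hfin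
      _ = ((t/2)^β + t^β) * (1/x) := by ring
  -- split
  have hsplit : ∫ σ in (0:ℝ)..t, f σ =
      (∫ σ in (0:ℝ)..(t/2), f σ) + ∫ σ in (t/2)..t, f σ :=
    (intervalIntegral.integral_add_adjacent_intervals hf1 hf2).symm
  -- rpow algebra
  have h2pos : (0:ℝ) < 2 := by norm_num
  have e2 : (t/2)^β = t^β * (2:ℝ)^(-β) := by
    rw [show t/2 = t * 2⁻¹ by ring, Real.mul_rpow ht.le (by norm_num),
      Real.inv_rpow h2pos.le, ← Real.rpow_neg h2pos.le]
  have e1 : (t/2)^(β+1) = t^(β+1) * (2:ℝ)^(-(β+1)) := by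
    rw [show t/2 = t * 2⁻¹ by ring, Real.mul_rpow ht.le (by norm_num),
      Real.inv_rpow h2pos.le, ← Real.rpow_neg h2pos.le]
  have e3 : t^(β+1) = t^β * t := Real.rpow_add_one (ne_of_gt ht) β
  have e4 : (2:ℝ)^(-(β+1)) = (2:ℝ)^(-β)/2 := by
    rw [show -(β+1) = -β + (-1) by ring, Real.rpow_add h2pos, Real.rpow_neg_one]
    ring
  have hue : x * t * Real.exp (-(x*(t/2))) ≤ 2 := by
    have := ue_le_two (u := x*t) (by positivity)
    rw [show x*t/2 = x*(t/2) by ring] at this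
    exact this
  have hw : (0:ℝ) < (2:ℝ)^(-β) := Real.rpow_pos_of_pos h2pos _
  have htb : (0:ℝ) < t^β := Real.rpow_pos_of_pos ht β
  have htb1 : (0:ℝ) < t^(β+1) := Real.rpow_pos_of_pos ht _
  have hexp0 : (0:ℝ) ≤ Real.exp (-(x*(t/2))) := Real.exp_nonneg _
  have hxP1 : x * ∫ σ in (0:ℝ)..(t/2), f σ ≤ t^β * ((2:ℝ)^(-β)/(β+1)) := by
    have h1 : x * ∫ σ in (0:ℝ)..(t/2), f σ ≤
        x * (Real.exp (-(x*(t/2))) * ((t/2)^(β+1)/(β+1))) :=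
      mul_le_mul_of_nonneg_left hP1 hx.le
    have h2 : x * (Real.exp (-(x*(t/2))) * ((t/2)^(β+1)/(β+1))) =
        (x * t * Real.exp (-(x*(t/2)))) * (t^β * ((2:ℝ)^(-β)/2) / (β+1)) := by
      rw [e1, e4, e3]; ring
    have h3 : (x * t * Real.exp (-(x*(t/2)))) * (t^β * ((2:ℝ)^(-β)/2) / (β+1)) ≤
        2 * (t^β * ((2:ℝ)^(-β)/2) / (β+1)) := by
      apply mul_le_mul_of_nonneg_right hue
      positivity
    calc x * ∫ σ in (0:ℝ)..(t/2), f σ ≤ _ := h1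
      _ = _ := h2
      _ ≤ 2 * (t^β * ((2:ℝ)^(-β)/2) / (β+1)) := h3
      _ = t^β * ((2:ℝ)^(-β)/(β+1)) := by ring
  have hxP2 : x * ∫ σ in (t/2)..t, f σ ≤ t^β * ((2:ℝ)^(-β) + 1) := by
    have h1 : x * ∫ σ in (t/2)..t, f σ ≤ x * (((t/2)^β + t^β) * (1/x)) :=
      mul_le_mul_of_nonneg_left hP2 hx.le
    have h2 : x * (((t/2)^β + t^β) * (1/x)) = (t/2)^β + t^β := by
      field_simp
    rw [h2, e2] at h1
    calc x * ∫ σ in (t/2)..t, f σ ≤ t^β * (2:ℝ)^(-β) + t^β := h1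
      _ = t^β * ((2:ℝ)^(-β) + 1) := by ring
  refine ⟨hY0, ?_⟩
  have hfinal : (1 + x*t) * ∫ σ in (0:ℝ)..t, f σ =
      (∫ σ in (0:ℝ)..t, f σ) + t * (x * ((∫ σ in (0:ℝ)..(t/2), f σ) +
        ∫ σ in (t/2)..t, f σ)) := by
    rw [← hsplit]; ring
  rw [hfinal]
  have hxsum : x * ((∫ σ in (0:ℝ)..(t/2), f σ) + ∫ σ in (t/2)..t, f σ) ≤
      t^β * ((2:ℝ)^(-β)/(β+1) + ((2:ℝ)^(-β) + 1)) := by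
    rw [mul_add, mul_add]
    exact add_le_add hxP1 hxP2
  calc (∫ σ in (0:ℝ)..t, f σ) + t * (x * ((∫ σ in (0:ℝ)..(t/2), f σ) +
        ∫ σ in (t/2)..t, f σ))
      ≤ t^(β+1)/(β+1) + t * (t^β * ((2:ℝ)^(-β)/(β+1) + ((2:ℝ)^(-β) + 1))) := by
        apply add_le_add hle1
        exact mul_le_mul_of_nonneg_left hxsum ht.le
    _ = (1/(β+1) + (2:ℝ)^(-β)/(β+1) + (2:ℝ)^(-β) + 1) * t^(β+1) := by
        rw [e3]; ring

lemma rpow_diff_le {β t : ℝ} (ht : 0 < t) {σ : ℝ} (hσ1 : t/2 ≤ σ) (hσ2 : σ ≤ t) :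
    |t^β - σ^β| ≤ (|β| * ((t/2)^(β-1) + t^(β-1))) * (t - σ) := by
  have ht2 : (0:ℝ) < t/2 := by linarith
  set s : Set ℝ := Set.Icc (t/2) t with hs
  have hd : ∀ u ∈ s, HasDerivWithinAt (fun v : ℝ => v^β) (β * u^(β-1)) s u := by
    intro u hu
    have hu0 : u ≠ 0 := by
      have := hu.1; intro h; rw [h] at this; linarith
    exact (Real.hasDerivAt_rpow_const (Or.inl hu0)).hasDerivWithinAt
  have hbound : ∀ u ∈ s, ‖β * u^(β-1)‖ ≤ |β| * ((t/2)^(β-1) + t^(β-1)) := by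
    intro u hu
    rw [norm_mul, Real.norm_eq_abs, Real.norm_eq_abs]
    have hu0 : (0:ℝ) < u := lt_of_lt_of_le ht2 hu.1
    rw [abs_of_nonneg (Real.rpow_nonneg hu0.le _)]
    exact mul_le_mul_of_nonneg_left (rpow_endpoint_bound ht hu.1 hu.2) (abs_nonneg β)
  have := Convex.norm_image_sub_le_of_norm_hasDerivWithin_le hd hbound
    (convex_Icc _ _) (Set.mem_Icc.mpr ⟨hσ1, hσ2⟩)
    (Set.mem_Icc.mpr ⟨by linarith, le_rfl⟩)
  rw [Real.norm_eq_abs, Real.norm_eq_abs] at this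
  calc |t^β - σ^β| ≤ (|β| * ((t/2)^(β-1) + t^(β-1))) * |t - σ| := this
    _ = (|β| * ((t/2)^(β-1) + t^(β-1))) * (t - σ) := by
        rw [show |t - σ| = t - σ from abs_of_nonneg (by linarith)]

lemma ue2_le {u : ℝ} (hu : 0 ≤ u) : u * (1+u) * Real.exp (-(u/2)) ≤ 16 := by
  have h1 : u/4 + 1 ≤ Real.exp (u/4) := Real.add_one_le_exp (u/4)
  have h2 : Real.exp (u/2) = Real.exp (u/4) * Real.exp (u/4) := by
    rw [← Real.exp_add]; ring_nf
  have h3 : (0:ℝ) < Real.exp (u/2) := Real.exp_pos _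
  rw [Real.exp_neg, ← div_eq_mul_inv, div_le_iff₀ h3]
  nlinarith [Real.exp_pos (u/4)]

lemma exp_one_add_le {u : ℝ} : (1+u) * Real.exp (-u) ≤ 1 := by
  have h3 : (0:ℝ) < Real.exp u := Real.exp_pos _
  rw [Real.exp_neg, ← div_eq_mul_inv, div_le_iff₀ h3]
  linarith [Real.add_one_le_exp u]

lemma D_bound {β : ℝ} (hβ : -1 < β) : ∃ K : ℝ, 0 < K ∧ ∀ x t : ℝ, 0 < x → 0 < t →
    (1 + x*t) * |t^β - x * ySol β x t| ≤ K * t^β := by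
  have hb1 : (0:ℝ) < β + 1 := by linarith
  set K1 : ℝ := 1/2 + (2:ℝ)^(-(β+1))/(β+1) with hK1
  set L0 : ℝ := |β| * ((2:ℝ)^(-(β-1)) + 1) with hL0
  have hK1pos : 0 < K1 := by positivity
  have hL0nn : 0 ≤ L0 := by positivity
  refine ⟨1 + 16*K1 + 2*L0, by positivity, ?_⟩
  intro x t hx ht
  rw [ySol_eq_integral hβ ht]
  set f : ℝ → ℝ := fun σ => Real.exp (-(x*(t-σ))) * σ^β with hf
  set g : ℝ → ℝ := fun σ => |Real.exp (-(x*(t-σ))) * (t^β - σ^β)| with hg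
  have ht2 : (0:ℝ) < t/2 := by linarith
  have ht2' : t/2 ≤ t := by linarith
  have hIcc1 : Set.uIcc (0:ℝ) (t/2) ⊆ Set.uIcc 0 t := by
    rw [Set.uIcc_of_le ht2.le, Set.uIcc_of_le ht.le]
    exact Set.Icc_subset_Icc le_rfl ht2'
  have hIcc2 : Set.uIcc (t/2) t ⊆ Set.uIcc (0:ℝ) t := by
    rw [Set.uIcc_of_le ht2', Set.uIcc_of_le ht.le]
    exact Set.Icc_subset_Icc ht2.le le_rfl
  have hfint : IntervalIntegrable f MeasureTheory.volume 0 t := intInt_exp_rpow hβ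
  have hexpint : ∀ a b : ℝ, IntervalIntegrable
      (fun σ : ℝ => Real.exp (-(x*(t-σ)))) MeasureTheory.volume a b :=
    integrable_exp_aux x t
  have hdiffint : IntervalIntegrable
      (fun σ : ℝ => Real.exp (-(x*(t-σ))) * (t^β - σ^β)) MeasureTheory.volume 0 t := by
    have : (fun σ : ℝ => Real.exp (-(x*(t-σ))) * (t^β - σ^β)) =
        (fun σ : ℝ => Real.exp (-(x*(t-σ))) * t^β - Real.exp (-(x*(t-σ))) * σ^β) := by
      funext σ; ring
    rw [this]
    exact ((hexpint 0 t).mul_const _).sub hfint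
  have hgint : IntervalIntegrable g MeasureTheory.volume 0 t := hdiffint.abs
  have hg1 : IntervalIntegrable g MeasureTheory.volume 0 (t/2) := hgint.mono_set hIcc1
  have hg2 : IntervalIntegrable g MeasureTheory.volume (t/2) t := hgint.mono_set hIcc2
  -- decomposition
  have hB : ∫ σ in (0:ℝ)..t, Real.exp (-(x*(t-σ))) = (1 - Real.exp (-(x*t)))/x := by
    rw [integral_exp_aux hx]
    rw [show t - t = 0 by ring, show -(x*(0:ℝ)) = 0 by ring, Real.exp_zero,
      show t - 0 = t by ring]
  have hA : ∫ σ in (0:ℝ)..t, Real.exp (-(x*(t-σ))) * (t^β - σ^β) =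
      t^β * ((1 - Real.exp (-(x*t)))/x) - ∫ σ in (0:ℝ)..t, f σ := by
    have h1 : ∫ σ in (0:ℝ)..t, Real.exp (-(x*(t-σ))) * (t^β - σ^β) =
        (∫ σ in (0:ℝ)..t, Real.exp (-(x*(t-σ))) * t^β) - ∫ σ in (0:ℝ)..t, f σ := by
      rw [← intervalIntegral.integral_sub ((hexpint 0 t).mul_const _) hfint]
      apply intervalIntegral.integral_congr
      intro σ _
      simp only [hf]
      ring
    rw [h1, intervalIntegral.integral_mul_const, hB]
    ring
  have hdecomp : t^β - x * ∫ σ in (0:ℝ)..t, f σ =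
      t^β * Real.exp (-(x*t)) +
        x * ∫ σ in (0:ℝ)..t, Real.exp (-(x*(t-σ))) * (t^β - σ^β) := by
    rw [hA]
    field_simp
    ring
  -- J bounds
  have habsle : |∫ σ in (0:ℝ)..t, Real.exp (-(x*(t-σ))) * (t^β - σ^β)| ≤
      ∫ σ in (0:ℝ)..t, g σ :=
    intervalIntegral.abs_integral_le_integral_abs ht.le
  have hsplit : ∫ σ in (0:ℝ)..t, g σ =
      (∫ σ in (0:ℝ)..(t/2), g σ) + ∫ σ in (t/2)..t, g σ :=
    (intervalIntegral.integral_add_adjacent_intervals hg1 hg2).symm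
  -- J1
  have hrint1 : IntervalIntegrable (fun σ:ℝ => σ^β) MeasureTheory.volume 0 (t/2) :=
    (intervalIntegral.intervalIntegrable_rpow' (a := 0) (b := t) hβ).mono_set hIcc1
  have hJ1 : ∫ σ in (0:ℝ)..(t/2), g σ ≤
      Real.exp (-(x*(t/2))) * (t^β * (t/2) + (t/2)^(β+1)/(β+1)) := by
    have hbint : IntervalIntegrable
        (fun σ : ℝ => Real.exp (-(x*(t/2))) * (t^β + σ^β)) MeasureTheory.volume 0 (t/2) := by
      have : (fun σ : ℝ => Real.exp (-(x*(t/2))) * (t^β + σ^β)) =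
          (fun σ : ℝ => Real.exp (-(x*(t/2))) * t^β +
            Real.exp (-(x*(t/2))) * σ^β) := by funext σ; ring
      rw [this]
      exact (intervalIntegrable_const).add (hrint1.const_mul _)
    have step : ∫ σ in (0:ℝ)..(t/2), g σ ≤
        ∫ σ in (0:ℝ)..(t/2), Real.exp (-(x*(t/2))) * (t^β + σ^β) := by
      apply intervalIntegral.integral_mono_on ht2.le hg1 hbint
      intro σ hσ
      rw [hg]
      simp only
      rw [abs_mul, abs_of_nonneg (Real.exp_nonneg _)]
      have h1 : Real.exp (-(x*(t-σ))) ≤ Real.exp (-(x*(t/2))) := by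
        apply Real.exp_le_exp.mpr
        have : x * (t/2) ≤ x * (t - σ) :=
          mul_le_mul_of_nonneg_left (by linarith [hσ.2]) hx.le
        linarith
      have h2 : |t^β - σ^β| ≤ t^β + σ^β := by
        have := abs_sub (t^β) (σ^β)
        rw [abs_of_nonneg (Real.rpow_nonneg ht.le β),
          abs_of_nonneg (Real.rpow_nonneg hσ.1 β)] at this
        exact this
      have h3 : (0:ℝ) ≤ t^β + σ^β :=
        add_nonneg (Real.rpow_nonneg ht.le β) (Real.rpow_nonneg hσ.1 β)
      calc Real.exp (-(x*(t-σ))) * |t^β - σ^β|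
          ≤ Real.exp (-(x*(t-σ))) * (t^β + σ^β) :=
            mul_le_mul_of_nonneg_left h2 (Real.exp_nonneg _)
        _ ≤ Real.exp (-(x*(t/2))) * (t^β + σ^β) :=
            mul_le_mul_of_nonneg_right h1 h3
    have heval : ∫ σ in (0:ℝ)..(t/2), Real.exp (-(x*(t/2))) * (t^β + σ^β) =
        Real.exp (-(x*(t/2))) * (t^β * (t/2) + (t/2)^(β+1)/(β+1)) := by
      have h1 : (fun σ : ℝ => Real.exp (-(x*(t/2))) * (t^β + σ^β)) =
          (fun σ : ℝ => Real.exp (-(x*(t/2))) * t^β +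
            Real.exp (-(x*(t/2))) * σ^β) := by funext σ; ring
      rw [h1, intervalIntegral.integral_add intervalIntegrable_const (hrint1.const_mul _),
        intervalIntegral.integral_const, intervalIntegral.integral_const_mul]
      rw [integral_rpow (Or.inl hβ), Real.zero_rpow (ne_of_gt hb1), sub_zero]
      simp only [smul_eq_mul, sub_zero]
      ring
    rw [heval] at step
    exact step
  -- J2
  set L : ℝ := |β| * ((t/2)^(β-1) + t^(β-1)) with hL
  have hLnn : 0 ≤ L := by
    apply mul_nonneg (abs_nonneg _)
    exact add_nonneg (Real.rpow_nonneg ht2.le _) (Real.rpow_nonneg ht.le _)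
  have hwint : IntervalIntegrable (fun σ : ℝ => Real.exp (-(x*(t-σ))) * (t-σ) * L)
      MeasureTheory.volume (t/2) t := by
    apply Continuous.intervalIntegrable
    exact (((Real.continuous_exp.comp ((continuous_const.mul (continuous_const.sub continuous_id)).neg)).mul (continuous_const.sub continuous_id)).mul
      continuous_const)
  have hJ2point : ∫ σ in (t/2)..t, g σ ≤
      (∫ σ in (t/2)..t, Real.exp (-(x*(t-σ))) * (t-σ)) * L := by
    rw [← intervalIntegral.integral_mul_const]
    apply intervalIntegral.integral_mono_on ht2' hg2 hwint
    intro σ hσ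
    rw [hg]
    simp only
    rw [abs_mul, abs_of_nonneg (Real.exp_nonneg _)]
    calc Real.exp (-(x*(t-σ))) * |t^β - σ^β|
        ≤ Real.exp (-(x*(t-σ))) * (L * (t - σ)) :=
          mul_le_mul_of_nonneg_left (rpow_diff_le ht hσ.1 hσ.2) (Real.exp_nonneg _)
      _ = Real.exp (-(x*(t-σ))) * (t-σ) * L := by ring
  have hweval : ∫ σ in (t/2)..t, Real.exp (-(x*(t-σ))) * (t-σ) =
      1/x^2 - ((t/2)/x + 1/x^2) * Real.exp (-(x*(t/2))) := by
    rw [integral_exp_mul_aux hx]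
    rw [show t - t = 0 by ring, show -(x*(0:ℝ)) = 0 by ring, Real.exp_zero,
      show t - t/2 = t/2 by ring]
    ring
  have hwle1 : ∫ σ in (t/2)..t, Real.exp (-(x*(t-σ))) * (t-σ) ≤ 1/x^2 := by
    rw [hweval]
    have h1 : 0 ≤ ((t/2)/x + 1/x^2) * Real.exp (-(x*(t/2))) := by positivity
    linarith
  have hwle2 : ∫ σ in (t/2)..t, Real.exp (-(x*(t-σ))) * (t-σ) ≤ t^2/8 := by
    have hcont : IntervalIntegrable (fun σ : ℝ => t - σ) MeasureTheory.volume (t/2) t :=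
      (continuous_const.sub continuous_id : Continuous (fun σ : ℝ => t - σ)).intervalIntegrable _ _
    have hwic : IntervalIntegrable (fun σ : ℝ => Real.exp (-(x*(t-σ))) * (t-σ))
        MeasureTheory.volume (t/2) t := by
      apply Continuous.intervalIntegrable
      exact (Real.continuous_exp.comp ((continuous_const.mul (continuous_const.sub continuous_id)).neg)).mul (continuous_const.sub continuous_id)
    have step : ∫ σ in (t/2)..t, Real.exp (-(x*(t-σ))) * (t-σ) ≤
        ∫ σ in (t/2)..t, (t - σ) := by
      apply intervalIntegral.integral_mono_on ht2' hwic hcont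
      intro σ hσ
      have h1 : Real.exp (-(x*(t-σ))) ≤ 1 := by
        rw [Real.exp_le_one_iff]
        have : 0 ≤ x * (t - σ) := mul_nonneg hx.le (by linarith [hσ.2])
        linarith
      have h2 : (0:ℝ) ≤ t - σ := by linarith [hσ.2]
      nlinarith
    have heval2 : ∫ σ in (t/2)..t, (t - σ) = t^2/8 := by
      rw [intervalIntegral.integral_sub intervalIntegrable_const
          (continuous_id'.intervalIntegrable _ _),
        intervalIntegral.integral_const, integral_id]
      simp only [smul_eq_mul]
      ring
    rw [heval2] at step
    exact step
  -- combine J2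
  have hJ2a : ∫ σ in (t/2)..t, g σ ≤ (1/x^2) * L :=
    hJ2point.trans (mul_le_mul_of_nonneg_right hwle1 hLnn)
  have hJ2b : ∫ σ in (t/2)..t, g σ ≤ (t^2/8) * L :=
    hJ2point.trans (mul_le_mul_of_nonneg_right hwle2 hLnn)
  -- rpow algebra
  have h2pos : (0:ℝ) < 2 := by norm_num
  have htb : (0:ℝ) < t^β := Real.rpow_pos_of_pos ht β
  have hK1t : t^β * (t/2) + (t/2)^(β+1)/(β+1) = K1 * t^(β+1) := by
    have e1 : (t/2)^(β+1) = t^(β+1) * (2:ℝ)^(-(β+1)) := by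
      rw [show t/2 = t * 2⁻¹ by ring, Real.mul_rpow ht.le (by norm_num),
        Real.inv_rpow h2pos.le, ← Real.rpow_neg h2pos.le]
    have e3 : t^(β+1) = t^β * t := Real.rpow_add_one (ne_of_gt ht) β
    rw [e1, hK1, e3]
    ring
  have hLt : L * t = L0 * t^β := by
    have e2 : (t/2)^(β-1) = t^(β-1) * (2:ℝ)^(-(β-1)) := by
      rw [show t/2 = t * 2⁻¹ by ring, Real.mul_rpow ht.le (by norm_num),
        Real.inv_rpow h2pos.le, ← Real.rpow_neg h2pos.le]
    have e3 : t^β = t^(β-1) * t := by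
      rw [← Real.rpow_add_one (ne_of_gt ht) (β-1)]
      norm_num
    rw [hL, hL0, e2, e3]
    ring
  -- absolute value bound
  set Y := ∫ σ in (0:ℝ)..t, f σ with hY
  set J1 := ∫ σ in (0:ℝ)..(t/2), g σ with hJ1d
  set J2 := ∫ σ in (t/2)..t, g σ with hJ2d
  have hJ1nn : 0 ≤ J1 := by
    rw [hJ1d]
    apply intervalIntegral.integral_nonneg ht2.le
    intro σ _; exact abs_nonneg _
  have hJ2nn : 0 ≤ J2 := by
    rw [hJ2d]
    apply intervalIntegral.integral_nonneg ht2'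
    intro σ _; exact abs_nonneg _
  have habs : |t^β - x * Y| ≤ t^β * Real.exp (-(x*t)) + x * (J1 + J2) := by
    rw [hdecomp]
    calc |t^β * Real.exp (-(x*t)) +
          x * ∫ σ in (0:ℝ)..t, Real.exp (-(x*(t-σ))) * (t^β - σ^β)|
        ≤ |t^β * Real.exp (-(x*t))| +
          |x * ∫ σ in (0:ℝ)..t, Real.exp (-(x*(t-σ))) * (t^β - σ^β)| := abs_add_le _ _
      _ ≤ t^β * Real.exp (-(x*t)) + x * (J1 + J2) := by
          apply add_le_add
          · rw [abs_of_nonneg (by positivity)]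
          · rw [abs_mul, abs_of_nonneg hx.le]
            apply mul_le_mul_of_nonneg_left _ hx.le
            calc |∫ σ in (0:ℝ)..t, Real.exp (-(x*(t-σ))) * (t^β - σ^β)|
                ≤ ∫ σ in (0:ℝ)..t, g σ := habsle
              _ = J1 + J2 := hsplit
  -- final assembly
  have hT1 : (1 + x*t) * (t^β * Real.exp (-(x*t))) ≤ t^β := by
    have := exp_one_add_le (u := x*t)
    calc (1 + x*t) * (t^β * Real.exp (-(x*t))) =
        t^β * ((1 + x*t) * Real.exp (-(x*t))) := by ring
      _ ≤ t^β * 1 := mul_le_mul_of_nonneg_left this htb.le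
      _ = t^β := mul_one _
  have hT2 : (1 + x*t) * (x * J1) ≤ 16 * K1 * t^β := by
    have hJ1' : J1 ≤ Real.exp (-((x*t)/2)) * (K1 * t^(β+1)) := by
      rw [← hK1t, show (x*t)/2 = x*(t/2) by ring]
      exact hJ1
    have e3 : t^(β+1) = t^β * t := Real.rpow_add_one (ne_of_gt ht) β
    have step : (1 + x*t) * (x * J1) ≤
        (x*t) * (1 + x*t) * Real.exp (-((x*t)/2)) * (K1 * t^β) := by
      calc (1 + x*t) * (x * J1)
          ≤ (1 + x*t) * (x * (Real.exp (-((x*t)/2)) * (K1 * t^(β+1)))) := by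
            apply mul_le_mul_of_nonneg_left _ (by positivity)
            exact mul_le_mul_of_nonneg_left hJ1' hx.le
        _ = (x*t) * (1 + x*t) * Real.exp (-((x*t)/2)) * (K1 * t^β) := by
            rw [e3]; ring
    have hue := ue2_le (u := x*t) (by positivity)
    calc (1 + x*t) * (x * J1) ≤
        (x*t) * (1 + x*t) * Real.exp (-((x*t)/2)) * (K1 * t^β) := step
      _ ≤ 16 * (K1 * t^β) := by
          apply mul_le_mul_of_nonneg_right _ (by positivity)
          calc (x*t) * (1 + x*t) * Real.exp (-((x*t)/2)) =
              (x*t) * (1 + (x*t)) * Real.exp (-((x*t)/2)) := by ring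
            _ ≤ 16 := hue
      _ = 16 * K1 * t^β := by ring
  have hT3 : (1 + x*t) * (x * J2) ≤ 2 * L0 * t^β := by
    rcases le_or_gt (x*t) 1 with hxt | hxt
    · have h1 : (1 + x*t) * (x * J2) ≤ (1 + x*t) * (x * ((t^2/8) * L)) := by
        apply mul_le_mul_of_nonneg_left _ (by positivity)
        exact mul_le_mul_of_nonneg_left hJ2b hx.le
      have h2 : (1 + x*t) * (x * ((t^2/8) * L)) ≤ 2 * (x * ((t^2/8) * L)) := by
        apply mul_le_mul_of_nonneg_right (by linarith)
        positivity
      have h3 : 2 * (x * ((t^2/8) * L)) = (x*t) * ((L*t)/4) := by ring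
      have h4 : (x*t) * ((L*t)/4) ≤ 1 * ((L*t)/4) := by
        apply mul_le_mul_of_nonneg_right hxt
        positivity
      have h5 : (1:ℝ) * ((L*t)/4) ≤ 2 * (L*t) := by
        have : (0:ℝ) ≤ L * t := mul_nonneg hLnn ht.le
        linarith
      calc (1 + x*t) * (x * J2) ≤ (1 + x*t) * (x * ((t^2/8) * L)) := h1
        _ ≤ 2 * (x * ((t^2/8) * L)) := h2
        _ = (x*t) * ((L*t)/4) := h3
        _ ≤ 1 * ((L*t)/4) := h4
        _ ≤ 2 * (L*t) := h5
        _ = 2 * L0 * t^β := by rw [hLt]; ring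
    · have h1 : (1 + x*t) * (x * J2) ≤ (1 + x*t) * (x * ((1/x^2) * L)) := by
        apply mul_le_mul_of_nonneg_left _ (by positivity)
        exact mul_le_mul_of_nonneg_left hJ2a hx.le
      have h2 : (1 + x*t) * (x * ((1/x^2) * L)) = (1 + x*t) / x * L := by
        field_simp
      have h3 : (1 + x*t) / x * L ≤ (2*(x*t)) / x * L := by
        apply mul_le_mul_of_nonneg_right _ hLnn
        gcongr
        linarith
      have h4 : (2*(x*t)) / x * L = 2 * (L * t) := by
        field_simp
      calc (1 + x*t) * (x * J2) ≤ (1 + x*t) * (x * ((1/x^2) * L)) := h1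
        _ = (1 + x*t) / x * L := h2
        _ ≤ (2*(x*t)) / x * L := h3
        _ = 2 * (L * t) := h4
        _ = 2 * L0 * t^β := by rw [hLt]; ring
  calc (1 + x*t) * |t^β - x * Y|
      ≤ (1 + x*t) * (t^β * Real.exp (-(x*t)) + x * (J1 + J2)) := by
        apply mul_le_mul_of_nonneg_left habs (by positivity)
    _ = (1 + x*t) * (t^β * Real.exp (-(x*t))) + (1 + x*t) * (x * J1) +
        (1 + x*t) * (x * J2) := by ring
    _ ≤ t^β + 16 * K1 * t^β + 2 * L0 * t^β := by
        apply add_le_add (add_le_add hT1 hT2) hT3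
    _ = (1 + 16*K1 + 2*L0) * t^β := by ring


lemma ySol_zero {β : ℝ} (hβ : -1 < β) (x : ℝ) : ySol β x 0 = 0 := by
  rw [ySol]
  have : ∀ k : ℕ, (-x) ^ k * (0:ℝ) ^ ((k : ℝ) + β + 1) / Real.Gamma ((k : ℝ) + β + 2) = 0 := by
    intro k
    have hk : (0:ℝ) ≤ k := Nat.cast_nonneg k
    rw [Real.zero_rpow (by linarith : (k : ℝ) + β + 1 ≠ 0)]
    simp
  rw [tsum_congr this, tsum_zero, mul_zero]

end FSAux

theorem first_step_defect_bound {s : ℕ} (hs : 0 < s)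
    (A : Matrix (Fin s) (Fin s) ℝ) (c : Fin s → ℝ)
    (hc_nonneg : ∀ i, 0 ≤ c i) (hc_mono : Monotone c)
    (hc_last : c ⟨s - 1, Nat.sub_lt hs Nat.one_pos⟩ = 1)
    (β : ℝ) (hβ : -1 < β) :
    ∃ C : ℝ, 0 < C ∧
      ((0 < c ⟨0, hs⟩ →
        ∀ τ₁ x : ℝ, 0 < τ₁ → 0 < x → ∀ i : Fin s,
          |d1Stage A c β τ₁ x i| ≤
            C * Real.Gamma (β + 1) * τ₁ ^ (β + 1) / (1 + x * c ⟨0, hs⟩ * τ₁)) ∧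
      (∀ h2 : 2 ≤ s, c ⟨0, hs⟩ = 0 → 0 < c ⟨1, h2⟩ → 0 < β →
        ∀ τ₁ x : ℝ, 0 < τ₁ → 0 < x → ∀ i : Fin s,
          |d1Stage A c β τ₁ x i| ≤
            C * Real.Gamma (β + 1) * τ₁ ^ (β + 1) / (1 + x * c ⟨1, h2⟩ * τ₁))) := by
  obtain ⟨Ky, hKy, hY⟩ := FSAux.Y_bound hβ
  obtain ⟨Kd, hKd, hD⟩ := FSAux.D_bound hβ
  have hΓ : 0 < Real.Gamma (β+1) := Real.Gamma_pos_of_pos (by linarith)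
  have hb1 : (0:ℝ) < β + 1 := by linarith
  set SA : ℝ := ∑ i : Fin s, ∑ j : Fin s, |A i j| with hSA
  have hSAnn : 0 ≤ SA :=
    Finset.sum_nonneg (fun i _ => Finset.sum_nonneg (fun j _ => abs_nonneg _))
  have hSArow : ∀ i : Fin s, (∑ j : Fin s, |A i j|) ≤ SA := by
    intro i
    rw [hSA]
    apply Finset.single_le_sum (f := fun i => ∑ j : Fin s, |A i j|)
      (fun i _ => Finset.sum_nonneg (fun j _ => abs_nonneg _)) (Finset.mem_univ i)
  set M : ℝ := max 1 ((c ⟨0, hs⟩)^β) with hM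
  have hM1 : (1:ℝ) ≤ M := le_max_left _ _
  have hMpos : (0:ℝ) < M := lt_of_lt_of_le one_pos hM1
  set C : ℝ := (Ky + SA*Kd*M)/Real.Gamma (β+1) with hC
  have hCpos : 0 < C := by positivity
  have hCG : C * Real.Gamma (β+1) = Ky + SA*Kd*M := by
    rw [hC]; field_simp
  have hcle1 : ∀ i : Fin s, c i ≤ 1 := by
    intro i
    rw [← hc_last]
    apply hc_mono
    rw [Fin.le_def]
    simp only
    omega
  -- generic estimate
  have key : ∀ τ x : ℝ, 0 < τ → 0 < x → ∀ cm : ℝ, 0 < cm →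
      (∀ i : Fin s, |ySol β x (c i * τ)| * (1 + x*cm*τ) ≤ Ky * τ^(β+1)) →
      (∀ j : Fin s, |(-x * ySol β x (c j*τ) + (c j*τ)^β)| * (1 + x*cm*τ) ≤ Kd*M*τ^β) →
      ∀ i : Fin s, |d1Stage A c β τ x i| ≤
        C * Real.Gamma (β+1) * τ^(β+1) / (1 + x*cm*τ) := by
    intro τ x hτ hx cm hcm hyb hDb i
    have hden : (0:ℝ) < 1 + x*cm*τ := by positivity
    simp only [d1Stage]
    have step1 : |ySol β x (c i * τ) -
        τ * ∑ j, A i j * (-x * ySol β x (c j * τ) + (c j * τ)^β)| ≤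
        |ySol β x (c i * τ)| +
          τ * ∑ j, |A i j| * |(-x * ySol β x (c j * τ) + (c j * τ)^β)| := by
      have h1 : |ySol β x (c i * τ) -
          τ * ∑ j, A i j * (-x * ySol β x (c j * τ) + (c j * τ)^β)| ≤
          |ySol β x (c i * τ)| +
            |τ * ∑ j, A i j * (-x * ySol β x (c j * τ) + (c j * τ)^β)| := by
        rw [sub_eq_add_neg]
        exact (abs_add_le _ _).trans (by rw [abs_neg])
      have h2 : |τ * ∑ j, A i j * (-x * ySol β x (c j * τ) + (c j * τ)^β)| ≤
          τ * ∑ j, |A i j| * |(-x * ySol β x (c j * τ) + (c j * τ)^β)| := by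
        rw [abs_mul, abs_of_nonneg hτ.le]
        apply mul_le_mul_of_nonneg_left _ hτ.le
        calc |∑ j, A i j * (-x * ySol β x (c j * τ) + (c j * τ)^β)|
            ≤ ∑ j, |A i j * (-x * ySol β x (c j * τ) + (c j * τ)^β)| :=
              Finset.abs_sum_le_sum_abs _ _
          _ = ∑ j, |A i j| * |(-x * ySol β x (c j * τ) + (c j * τ)^β)| := by
              apply Finset.sum_congr rfl
              intro j _
              rw [abs_mul]
      linarith
    have step2 : ∑ j, |A i j| * |(-x * ySol β x (c j * τ) + (c j * τ)^β)| ≤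
        SA * (Kd*M*τ^β / (1 + x*cm*τ)) := by
      have hterm : ∀ j : Fin s, |A i j| * |(-x * ySol β x (c j * τ) + (c j * τ)^β)| ≤
          |A i j| * (Kd*M*τ^β / (1 + x*cm*τ)) := by
        intro j
        apply mul_le_mul_of_nonneg_left _ (abs_nonneg _)
        rw [le_div_iff₀ hden]
        exact hDb j
      calc ∑ j, |A i j| * |(-x * ySol β x (c j * τ) + (c j * τ)^β)|
          ≤ ∑ j, |A i j| * (Kd*M*τ^β / (1 + x*cm*τ)) :=
            Finset.sum_le_sum (fun j _ => hterm j)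
        _ = (∑ j : Fin s, |A i j|) * (Kd*M*τ^β / (1 + x*cm*τ)) := by
            rw [← Finset.sum_mul]
        _ ≤ SA * (Kd*M*τ^β / (1 + x*cm*τ)) := by
            apply mul_le_mul_of_nonneg_right (hSArow i)
            positivity
    have step3 : |ySol β x (c i * τ)| ≤ Ky * τ^(β+1) / (1 + x*cm*τ) := by
      rw [le_div_iff₀ hden]
      exact hyb i
    have hτpow : τ * τ^β = τ^(β+1) := by
      rw [Real.rpow_add_one (ne_of_gt hτ) β]; ring
    calc |ySol β x (c i * τ) -
        τ * ∑ j, A i j * (-x * ySol β x (c j * τ) + (c j * τ)^β)|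
        ≤ |ySol β x (c i * τ)| +
          τ * ∑ j, |A i j| * |(-x * ySol β x (c j * τ) + (c j * τ)^β)| := step1
      _ ≤ Ky * τ^(β+1) / (1 + x*cm*τ) + τ * (SA * (Kd*M*τ^β / (1 + x*cm*τ))) := by
          apply add_le_add step3
          exact mul_le_mul_of_nonneg_left step2 hτ.le
      _ = (Ky + SA*Kd*M) * τ^(β+1) / (1 + x*cm*τ) := by
          rw [← hτpow]
          field_simp
      _ = C * Real.Gamma (β+1) * τ^(β+1) / (1 + x*cm*τ) := by rw [hCG]
  -- bounds used in both cases, for stages with cm ≤ c j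
  have hyb_pos : ∀ τ x : ℝ, 0 < τ → 0 < x → ∀ cm : ℝ, 0 < cm → ∀ i : Fin s,
      cm ≤ c i → |ySol β x (c i * τ)| * (1 + x*cm*τ) ≤ Ky * τ^(β+1) := by
    intro τ x hτ hx cm hcm i hci
    have hti : 0 < c i * τ := mul_pos (lt_of_lt_of_le hcm hci) hτ
    obtain ⟨hY0, hY1⟩ := hY x (c i * τ) hx hti
    rw [abs_of_nonneg hY0]
    have h1 : 1 + x*cm*τ ≤ 1 + x*(c i * τ) := by
      have : cm * τ ≤ c i * τ := mul_le_mul_of_nonneg_right hci hτ.le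
      nlinarith
    have h2 : ySol β x (c i * τ) * (1 + x*cm*τ) ≤ ySol β x (c i * τ) * (1 + x*(c i * τ)) :=
      mul_le_mul_of_nonneg_left h1 hY0
    have h3 : (c i * τ)^(β+1) ≤ τ^(β+1) := by
      apply Real.rpow_le_rpow (le_of_lt hti) _ hb1.le
      calc c i * τ ≤ 1 * τ := mul_le_mul_of_nonneg_right (hcle1 i) hτ.le
        _ = τ := one_mul τ
    calc ySol β x (c i * τ) * (1 + x*cm*τ) ≤ ySol β x (c i * τ) * (1 + x*(c i*τ)) := h2
      _ = (1 + x*(c i*τ)) * ySol β x (c i * τ) := by ring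
      _ ≤ Ky * (c i * τ)^(β+1) := hY1
      _ ≤ Ky * τ^(β+1) := mul_le_mul_of_nonneg_left h3 hKy.le
  have hDb_pos : ∀ τ x : ℝ, 0 < τ → 0 < x → ∀ cm : ℝ, 0 < cm →
      c ⟨0, hs⟩ = cm ∨ 0 ≤ β → ∀ j : Fin s, cm ≤ c j →
      |(-x * ySol β x (c j*τ) + (c j*τ)^β)| * (1 + x*cm*τ) ≤ Kd*M*τ^β := by
    intro τ x hτ hx cm hcm hMcase j hcj
    have htj : 0 < c j * τ := mul_pos (lt_of_lt_of_le hcm hcj) hτ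
    have hDj := hD x (c j * τ) hx htj
    have habs : |(-x * ySol β x (c j*τ) + (c j*τ)^β)| =
        |(c j*τ)^β - x * ySol β x (c j*τ)| := by
      congr 1
      ring
    rw [habs]
    have h1 : 1 + x*cm*τ ≤ 1 + x*(c j * τ) := by
      have : cm * τ ≤ c j * τ := mul_le_mul_of_nonneg_right hcj hτ.le
      nlinarith
    have h2 : |(c j*τ)^β - x * ySol β x (c j*τ)| * (1 + x*cm*τ) ≤
        (1 + x*(c j*τ)) * |(c j*τ)^β - x * ySol β x (c j*τ)| := by
      rw [mul_comm]
      exact mul_le_mul_of_nonneg_right h1 (abs_nonneg _)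
    have h3 : (c j * τ)^β ≤ M * τ^β := by
      have hcj0 : 0 < c j := lt_of_lt_of_le hcm hcj
      rw [Real.mul_rpow hcj0.le hτ.le]
      apply mul_le_mul_of_nonneg_right _ (Real.rpow_nonneg hτ.le β)
      rcases hMcase with hMc | hβ0
      · rcases le_or_gt 0 β with hβ0 | hβneg
        · calc (c j)^β ≤ 1 := Real.rpow_le_one hcj0.le (hcle1 j) hβ0
            _ ≤ M := hM1
        · calc (c j)^β ≤ cm^β := Real.rpow_le_rpow_of_nonpos hcm hcj hβneg.le
            _ = (c ⟨0, hs⟩)^β := by rw [hMc]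
            _ ≤ M := le_max_right _ _
      · calc (c j)^β ≤ 1 := Real.rpow_le_one hcj0.le (hcle1 j) hβ0
          _ ≤ M := hM1
    calc |(c j*τ)^β - x * ySol β x (c j*τ)| * (1 + x*cm*τ)
        ≤ (1 + x*(c j*τ)) * |(c j*τ)^β - x * ySol β x (c j*τ)| := h2
      _ ≤ Kd * (c j * τ)^β := hDj
      _ ≤ Kd * (M * τ^β) := mul_le_mul_of_nonneg_left h3 hKd.le
      _ = Kd*M*τ^β := by ring
  refine ⟨C, hCpos, ?_, ?_⟩
  · -- case c₁ > 0
    intro hc1 τ x hτ hx i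
    apply key τ x hτ hx (c ⟨0, hs⟩) hc1 _ _ i
    · intro i'
      exact hyb_pos τ x hτ hx _ hc1 i'
        (hc_mono (by rw [Fin.le_def]; exact Nat.zero_le _))
    · intro j
      exact hDb_pos τ x hτ hx _ hc1 (Or.inl rfl) j
        (hc_mono (by rw [Fin.le_def]; exact Nat.zero_le _))
  · -- case c₁ = 0, c₂ > 0, β > 0
    intro h2 hc0 hc2 hβ0 τ x hτ hx i
    apply key τ x hτ hx (c ⟨1, h2⟩) hc2 _ _ i
    · intro i'
      rcases Nat.eq_zero_or_pos (i' : ℕ) with h0 | h1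
      · have : i' = ⟨0, hs⟩ := by
          apply Fin.ext
          exact h0
        rw [this, hc0, zero_mul, FSAux.ySol_zero hβ, abs_zero, zero_mul]
        positivity
      · exact hyb_pos τ x hτ hx _ hc2 i'
          (hc_mono (by rw [Fin.le_def]; exact h1))
    · intro j
      rcases Nat.eq_zero_or_pos (j : ℕ) with h0 | h1
      · have hj : j = ⟨0, hs⟩ := by
          apply Fin.ext
          exact h0
        rw [hj, hc0, zero_mul, FSAux.ySol_zero hβ, mul_zero, zero_add,
          Real.zero_rpow (ne_of_gt hβ0), abs_zero, zero_mul]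
        positivity
      · exact hDb_pos τ x hτ hx _ hc2 (Or.inr hβ0.le) j
          (hc_mono (by rw [Fin.le_def]; exact h1))

end
end
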